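/- arXiv:1802.03509 — 8 statements merged into one kernel-verified Lean document; each statement's English description precedes it below -/
import Mathlib

section
/- Let d be a positive integer and let ā = ⟨aⁱ : i < d⟩ be an independent finite sequence of conditionally convergent real series, i.e., K(ā) = {0}. Then for every vector v ∈ ℝ^d there is a permutation p of ℕ such that for each i < d the series Σ_n aⁱ_{p(n)} converges to vᵢ. -/
/-!
Write `Aₙ ∈ ℝ^d` for the vector `(aⁱₙ)ᵢ`. Independence says that every nonzero functional `f`
has `∑ |f(Aₙ)| = ∞`; as `∑ f(Aₙ)` converges, the positive parts `f(Aₙ)⁺` are not summable. By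
Hahn–Banach, the `[0,1]`-weighted sums `∑_{n ∈ U} λₙ Aₙ` over finite sets of small, not yet used
indices are then dense in `ℝ^d`. A vertex of the polytope of weights realising the same sum has
at most `d` fractional coordinates, so rounding gives a finite set `G` of fresh indices with
`∑_{n ∈ G} Aₙ` within `(d + 1) ε` of any target. Steinitz's lemma (the same vertex argument in
`ℝ^d × ℝ`, applied repeatedly to remove an index of weight `0`) orders `G` so that every partial
sum has norm at most `d ε + ‖∑_{n ∈ G} Aₙ‖`. Appending such blocks, each first absorbing the least
unused index, with `ε → 0`, builds the required permutation.
-/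

open Filter

/-- A real series is conditionally convergent: its partial sums converge
but the series of absolute values diverges. -/
def CondConv (a : ℕ → ℝ) : Prop :=
  (∃ l : ℝ, Tendsto (fun N => ∑ n ∈ Finset.range N, a n) atTop (nhds l)) ∧
    ¬ Summable fun n => |a n|

open Set Topology Module
open scoped Finset

section Steinitz

variable {ι E : Type*} [NormedAddCommGroup E] [NormedSpace ℝ E]

theorem exists_eq_zero_of_sum_le_card_sub {F : Finset ι} {m : ι → ℝ} (hm : m ∈ Icc 0 1) {k : ℕ}
    (hk : 0 < k) (hfrac : #{i ∈ F | m i ∈ Ioo 0 1} ≤ k) (hsum : ∑ i ∈ F, m i ≤ #F - k) :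
    ∃ i ∈ F, m i = 0 := by
  by_contra! h
  set T := {i ∈ F | m i ∈ Ioo 0 1}
  have hT : ∑ i ∈ F, (1 - m i) = ∑ i ∈ T, (1 - m i) := by
    rw [Finset.sum_filter]
    refine Finset.sum_congr rfl fun i hi => ?_
    split_ifs with hi'
    · rfl
    · have : m i = 1 := by
        by_contra h1
        exact hi' ⟨(hm.1 i).lt_of_ne' (h i hi), (hm.2 i).lt_of_ne h1⟩
      simp [this]
  have hlt : ∑ i ∈ T, (1 - m i) < k := by
    rcases T.eq_empty_or_nonempty with h0 | hne
    · simpa [h0] using hk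
    · calc ∑ i ∈ T, (1 - m i) < ∑ i ∈ T, (1 : ℝ) :=
            Finset.sum_lt_sum_of_nonempty hne fun i hi => by linarith [(Finset.mem_filter.1 hi).2.1]
        _ ≤ k := by simpa using hfrac
  have hF : ∑ i ∈ F, (1 - m i) = #F - ∑ i ∈ F, m i := by simp [Finset.sum_sub_distrib]
  linarith

theorem norm_sum_le_of_weights {F : Finset ι} {x : ι → E} {ε C D : ℝ} (hε : 0 ≤ ε)
    (hx : ∀ i ∈ F, ‖x i‖ ≤ ε) {l : ι → ℝ} (hl : l ∈ Icc 0 1) (hcard : (#F : ℝ) ≤ ∑ i ∈ F, l i + D)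
    (hC : ‖∑ i ∈ F, l i • x i‖ ≤ C) :
    ‖∑ i ∈ F, x i‖ ≤ D * ε + C := by
  have hsplit : ∑ i ∈ F, x i = ∑ i ∈ F, (1 - l i) • x i + ∑ i ∈ F, l i • x i := by
    simp [← Finset.sum_add_distrib, ← add_smul]
  have hrest : ‖∑ i ∈ F, (1 - l i) • x i‖ ≤ D * ε :=
    calc _ ≤ ∑ i ∈ F, (1 - l i) * ε := norm_sum_le_of_le _ fun i hi => by
          have : 0 ≤ 1 - l i := sub_nonneg.2 (hl.2 i)
          rw [norm_smul, Real.norm_of_nonneg this]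
          exact mul_le_mul_of_nonneg_left (hx i hi) this
      _ = (#F - ∑ i ∈ F, l i) * ε := by simp [Finset.sum_sub_distrib, Finset.sum_mul, sub_mul]
      _ ≤ D * ε := by gcongr; linarith
  rw [hsplit]
  exact (norm_add_le _ _).trans (add_le_add hrest hC)

variable [FiniteDimensional ℝ E]

theorem exists_weights_few_fractional (F : Finset ι) (y : ι → E) {l : ι → ℝ} (hl : l ∈ Icc 0 1) :
    ∃ m ∈ Icc (0 : ι → ℝ) 1, ∑ i ∈ F, m i • y i = ∑ i ∈ F, l i • y i ∧
      #{i ∈ F | m i ∈ Ioo 0 1} ≤ finrank ℝ E := by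
  classical
  set P := Icc (0 : ι → ℝ) 1 ∩ {m | ∑ i ∈ F, m i • y i = ∑ i ∈ F, l i • y i}
  have hP : IsCompact P := isCompact_Icc.inter_right (isClosed_eq (by fun_prop) continuous_const)
  obtain ⟨m, hmP, hm⟩ := hP.extremePoints_nonempty ⟨l, hl, rfl⟩
  refine ⟨m, hmP.1, hmP.2, ?_⟩
  set T := {i ∈ F | m i ∈ Ioo 0 1}
  suffices LinearIndepOn ℝ y (T : Set ι) by simpa using this.fintype_card_le_finrank
  refine linearIndepOn_finset_iff.2 fun g hg i hi => ?_
  -- an extreme point of `P` cannot be moved both ways along `g` restricted to `T`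
  have hsmall : ∀ᶠ s in 𝓝 (0 : ℝ), ∀ j ∈ T, m j + s * g j ∈ Ioo 0 1 := by
    refine (eventually_all_finset T).2 fun j hj => ?_
    have hc : Tendsto (fun s : ℝ => m j + s * g j) (𝓝 0) (𝓝 (m j)) := by
      have hcont : Continuous fun s : ℝ => m j + s * g j := by fun_prop
      simpa using hcont.tendsto 0
    exact hc.eventually (isOpen_Ioo.mem_nhds (Finset.mem_filter.1 hj).2)
  obtain ⟨δ, hδT, hδ⟩ := (((hsmall.and ((continuous_neg.tendsto' 0 0 neg_zero).eventually
    hsmall)).filter_mono nhdsWithin_le_nhds).and (self_mem_nhdsWithin (s := Ioi 0))).exists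
  set g' : ι → ℝ := fun j => if j ∈ T then g j else 0
  have hmem : ∀ s : ℝ, (∀ j ∈ T, m j + s * g j ∈ Ioo 0 1) → m + s • g' ∈ P := by
    intro s hs
    have hIcc : ∀ j, (m + s • g') j ∈ Icc 0 1 := by
      intro j
      by_cases hj : j ∈ T
      · simpa [g', hj] using Ioo_subset_Icc_self (hs j hj)
      · simpa [g', hj] using (⟨hmP.1.1 j, hmP.1.2 j⟩ : m j ∈ Icc 0 1)
    have hg' : ∑ j ∈ F, g' j • y j = 0 := by
      simp only [g', ite_smul, zero_smul]
      rwa [Finset.sum_ite_mem, Finset.inter_eq_right.2 (Finset.filter_subset _ _)]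
    refine ⟨⟨fun j => (hIcc j).1, fun j => (hIcc j).2⟩, ?_⟩
    simp only [mem_ofPred_eq, Pi.add_apply, Pi.smul_apply, smul_eq_mul, add_smul, mul_smul,
      Finset.sum_add_distrib, ← Finset.smul_sum, hg', smul_zero, add_zero]
    exact hmP.2
  have hδg' : δ • g' = 0 := by
    have := hm (hmem δ hδT.1) (hmem (-δ) (by simpa using hδT.2)) (by
      simpa [neg_smul, ← sub_eq_add_neg] using mem_openSegment_add_sub (𝕜 := ℝ) m (δ • g'))
    simpa using this
  simpa [g', hi, hδ.ne'] using congrFun hδg' i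

theorem exists_subset_norm_sum_sub_sum_smul_le (F : Finset ι) {x : ι → E} {ε : ℝ} (hε : 0 ≤ ε)
    (hx : ∀ i ∈ F, ‖x i‖ ≤ ε) {l : ι → ℝ} (hl : l ∈ Icc 0 1) :
    ∃ G ⊆ F, ‖∑ i ∈ G, x i - ∑ i ∈ F, l i • x i‖ ≤ finrank ℝ E * ε := by
  obtain ⟨m, hm, hsum, hcard⟩ := exists_weights_few_fractional F x hl
  refine ⟨{i ∈ F | m i = 1}, Finset.filter_subset _ _, ?_⟩
  have hdiff : ∑ i ∈ {i ∈ F | m i = 1}, x i - ∑ i ∈ F, m i • x i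
      = ∑ i ∈ F, ((if m i = 1 then 1 else 0) - m i) • x i := by
    simp [sub_smul, Finset.sum_sub_distrib, Finset.sum_filter, ite_smul]
  rw [← hsum, hdiff]
  calc _ ≤ ∑ i ∈ F, if m i ∈ Ioo 0 1 then ε else 0 := by
        refine norm_sum_le_of_le _ fun i hi => ?_
        split_ifs with h1 h0 h0
        · exact absurd (h1 ▸ h0.2) (lt_irrefl 1)
        · simp [h1]
        · rw [norm_smul, zero_sub, norm_neg, Real.norm_of_nonneg h0.1.le]
          nlinarith [norm_nonneg (x i), hx i hi, h0.2]
        · have : m i = 0 := by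
            by_contra h
            exact h0 ⟨(hm.1 i).lt_of_ne' h, (hm.2 i).lt_of_ne h1⟩
          simp [this]
    _ = #{i ∈ F | m i ∈ Ioo 0 1} * ε := by rw [← Finset.sum_filter, Finset.sum_const, nsmul_eq_mul]
    _ ≤ finrank ℝ E * ε := by gcongr

theorem exists_weights_on_erase [DecidableEq ι] {F : Finset ι} (hF : F.Nonempty) {x : ι → E}
    {C : ℝ} {l : ι → ℝ} (hl : l ∈ Icc 0 1) (hcard : (#F : ℝ) ≤ ∑ i ∈ F, l i + finrank ℝ E)
    (hC : ‖∑ i ∈ F, l i • x i‖ ≤ C) :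
    ∃ i ∈ F, ∃ l' ∈ Icc (0 : ι → ℝ) 1,
      (#(F.erase i) : ℝ) ≤ ∑ j ∈ F.erase i, l' j + finrank ℝ E ∧
      ‖∑ j ∈ F.erase i, l' j • x j‖ ≤ C := by
  set D := finrank ℝ E
  have hC0 : 0 ≤ C := (norm_nonneg _).trans hC
  rcases le_or_gt #F D with hsmall | hlarge
  · obtain ⟨i, hi⟩ := hF
    refine ⟨i, hi, 0, ⟨le_rfl, zero_le_one⟩, ?_, by simpa using hC0⟩
    have : #(F.erase i) ≤ D := (Finset.card_erase_le).trans hsmall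
    simpa using this
  -- Scale the weights down to total `#F - D - 1` and sparsify them in `E × ℝ`, whose second
  -- coordinate keeps the total: with at most `D + 1` fractional weights, one weight must be `0`.
  set s := ∑ i ∈ F, l i
  have hs : (#F : ℝ) - D - 1 ≤ s := by linarith
  have hs1 : (#F : ℝ) - D - 1 ≥ 0 := by
    have : (D : ℝ) + 1 ≤ #F := by exact_mod_cast hlarge
    linarith
  have hspos : 0 < s := by linarith
  set t := ((#F : ℝ) - D - 1) / s
  have ht : t ∈ Icc (0 : ℝ) 1 := ⟨div_nonneg hs1 hspos.le, (div_le_one hspos).2 hs⟩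
  have htl : t • l ∈ Icc (0 : ι → ℝ) 1 :=
    ⟨fun i => mul_nonneg ht.1 (hl.1 i), fun i => mul_le_one₀ ht.2 (hl.1 i) (hl.2 i)⟩
  obtain ⟨m, hm, hsum, hfrac⟩ := exists_weights_few_fractional F (fun i => (x i, (1 : ℝ))) htl
  have hfst : ∑ i ∈ F, m i • x i = t • ∑ i ∈ F, l i • x i := by
    simpa [Prod.fst_sum, Finset.smul_sum, smul_smul] using congrArg Prod.fst hsum
  have hsnd : ∑ i ∈ F, m i = #F - D - 1 := by
    have := congrArg Prod.snd hsum
    simp only [Prod.snd_sum, Prod.smul_snd, smul_eq_mul, mul_one, Pi.smul_apply] at this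
    rw [this, ← Finset.mul_sum, div_mul_cancel₀ _ hspos.ne']
  rw [finrank_prod, finrank_self] at hfrac
  obtain ⟨i, hi, hmi⟩ :=
    exists_eq_zero_of_sum_le_card_sub hm D.succ_pos hfrac (by push_cast; linarith)
  refine ⟨i, hi, m, hm, ?_, ?_⟩
  · rw [Finset.sum_erase _ hmi, hsnd, Finset.cast_card_erase_of_mem hi]
    linarith
  · rw [Finset.sum_erase _ (by simp [hmi]), hfst, norm_smul, Real.norm_of_nonneg ht.1]
    exact (mul_le_mul_of_nonneg_left hC ht.1).trans (mul_le_of_le_one_left hC0 ht.2)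

theorem exists_list_prefix_sums_le_of_weights [DecidableEq ι] {x : ι → E} {ε C : ℝ} (hε : 0 ≤ ε)
    (F : Finset ι) (hx : ∀ i ∈ F, ‖x i‖ ≤ ε) {l : ι → ℝ} (hl : l ∈ Icc 0 1)
    (hcard : (#F : ℝ) ≤ ∑ i ∈ F, l i + finrank ℝ E) (hC : ‖∑ i ∈ F, l i • x i‖ ≤ C) :
    ∃ L : List ι, L.Nodup ∧ L.toFinset = F ∧
      ∀ L₀, L₀ <+: L → ‖(L₀.map x).sum‖ ≤ finrank ℝ E * ε + C := by
  induction F using Finset.strongInduction generalizing l with | H F ih => ?_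
  rcases F.eq_empty_or_nonempty with rfl | hF
  · refine ⟨[], List.nodup_nil, rfl, fun L₀ h => ?_⟩
    rw [List.prefix_nil.1 h]
    simpa using add_nonneg (mul_nonneg (Nat.cast_nonneg _) hε) ((norm_nonneg _).trans hC)
  obtain ⟨i, hi, l', hl', hcard', hC'⟩ := exists_weights_on_erase hF hl hcard hC
  obtain ⟨L, hL, hLF, hLx⟩ := ih _ (Finset.erase_ssubset hi)
    (fun j hj => hx j (Finset.mem_of_mem_erase hj)) hl' hcard' hC'
  have hnd : (L ++ [i]).Nodup := by
    refine List.nodup_append.2 ⟨hL, List.nodup_singleton i, fun a ha b hb hab => ?_⟩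
    have : a ∈ F.erase i := hLF ▸ List.mem_toFinset.2 ha
    simp_all
  have hLF' : (L ++ [i]).toFinset = F := by
    simp [List.toFinset_append, hLF, Finset.insert_erase hi]
  refine ⟨L ++ [i], hnd, hLF', fun L₀ h => ?_⟩
  rcases List.prefix_concat_iff.1 h with rfl | h
  · rw [← List.sum_toFinset _ hnd, hLF']
    exact norm_sum_le_of_weights hε hx hl hcard hC
  · exact hLx L₀ h

theorem exists_list_prefix_sums_le [DecidableEq ι] {x : ι → E} {ε C : ℝ} (hε : 0 ≤ ε)
    (F : Finset ι) (hx : ∀ i ∈ F, ‖x i‖ ≤ ε) (hC : ‖∑ i ∈ F, x i‖ ≤ C) :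
    ∃ L : List ι, L.Nodup ∧ L.toFinset = F ∧
      ∀ L₀, L₀ <+: L → ‖(L₀.map x).sum‖ ≤ finrank ℝ E * ε + C :=
  exists_list_prefix_sums_le_of_weights hε F hx (l := 1) ⟨zero_le_one, le_rfl⟩ (by simp)
    (by simpa using hC)

end Steinitz

section Density

variable {ι E : Type*} [NormedAddCommGroup E] [NormedSpace ℝ E]

theorem exists_disjoint_le_sum_of_not_summable_posPart {y : ι → ℝ}
    (hy : ¬Summable fun n => (y n)⁺) (B : Finset ι) (R : ℝ) :
    ∃ G : Finset ι, Disjoint G B ∧ R ≤ ∑ n ∈ G, y n := by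
  classical
  by_contra! h
  refine hy (summable_of_sum_le (c := ∑ n ∈ B, (y n)⁺ + R) (fun n => posPart_nonneg _) fun G => ?_)
  have hGB : ∑ n ∈ G \ B, (y n)⁺ < R := by
    simpa [posPart_eq_ite, Finset.sum_filter] using
      h {n ∈ G \ B | 0 ≤ y n}
        (Finset.disjoint_of_subset_left (Finset.filter_subset _ _) Finset.sdiff_disjoint)
  calc ∑ n ∈ G, (y n)⁺ ≤ ∑ n ∈ G ∪ B, (y n)⁺ :=
        Finset.sum_le_sum_of_subset_of_nonneg Finset.subset_union_left fun n _ _ => posPart_nonneg _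
    _ = ∑ n ∈ G \ B, (y n)⁺ + ∑ n ∈ B, (y n)⁺ := by
        rw [← Finset.sum_sdiff Finset.subset_union_right, Finset.union_sdiff_right]
    _ ≤ ∑ n ∈ B, (y n)⁺ + R := by linarith

theorem convex_setOf_exists_sum_smul (A : ι → E) (s : Set ι) :
    Convex ℝ {z | ∃ U : Finset ι, ↑U ⊆ s ∧ ∃ l ∈ Icc (0 : ι → ℝ) 1, ∑ n ∈ U, l n • A n = z} := by
  classical
  rintro _ ⟨U, hU, l, hl, rfl⟩ _ ⟨U', hU', l', hl', rfl⟩ a b ha hb hab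
  have hcut : ∀ (V : Finset ι) (k : ι → ℝ), k ∈ Icc 0 1 → ∀ n,
      (if n ∈ V then k n else 0) ∈ Icc (0 : ℝ) 1 := fun V k hk n => by
    split_ifs
    exacts [⟨hk.1 n, hk.2 n⟩, ⟨le_rfl, zero_le_one⟩]
  have hmem n := convex_Icc (0 : ℝ) 1 (hcut U l hl n) (hcut U' l' hl' n) ha hb hab
  refine ⟨U ∪ U', by simpa using ⟨hU, hU'⟩,
    fun n => a * (if n ∈ U then l n else 0) + b * (if n ∈ U' then l' n else 0),
    ⟨fun n => (hmem n).1, fun n => (hmem n).2⟩, ?_⟩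
  simp only [add_smul, mul_smul, Finset.sum_add_distrib, ← Finset.smul_sum, ite_smul, zero_smul,
      Finset.sum_ite_mem, Finset.union_inter_cancel_left, Finset.union_inter_cancel_right]

theorem dense_setOf_exists_sum_smul {A : ι → E} {s : Set ι}
    (h : ∀ f : E →L[ℝ] ℝ, f ≠ 0 → ∀ R, ∃ G : Finset ι, ↑G ⊆ s ∧ R ≤ ∑ n ∈ G, f (A n)) :
    Dense {z | ∃ U : Finset ι, ↑U ⊆ s ∧ ∃ l ∈ Icc (0 : ι → ℝ) 1, ∑ n ∈ U, l n • A n = z} := by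
  intro w
  by_contra hw
  obtain ⟨f, u, hfu, hufw⟩ := geometric_hahn_banach_closed_point
    (convex_setOf_exists_sum_smul A s).closure isClosed_closure hw
  have hu : 0 < u := by
    simpa using hfu 0 (subset_closure ⟨∅, by simp, 0, ⟨le_rfl, zero_le_one⟩, by simp⟩)
  have hf : f ≠ 0 := by
    rintro rfl
    simp at hufw; linarith
  obtain ⟨G, hGs, hG⟩ := h f hf u
  have := hfu _ (subset_closure ⟨G, hGs, 1, ⟨zero_le_one, le_rfl⟩, rfl⟩)
  simp [map_sum] at this
  linarith

variable [FiniteDimensional ℝ E] {A : ι → E}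

theorem exists_disjoint_norm_sum_sub_le
    (hdiv : ∀ f : E →L[ℝ] ℝ, f ≠ 0 → ¬Summable fun n => (f (A n))⁺) {B : Finset ι} {ε : ℝ}
    (hε : 0 < ε) (hB : ∀ n ∉ B, ‖A n‖ ≤ ε) (w : E) :
    ∃ G : Finset ι, Disjoint G B ∧ ‖∑ n ∈ G, A n - w‖ ≤ (finrank ℝ E + 1) * ε := by
  have hdense := dense_setOf_exists_sum_smul (A := A) (s := (↑B)ᶜ) fun f hf R => by
    obtain ⟨G, hGB, hG⟩ := exists_disjoint_le_sum_of_not_summable_posPart (hdiv f hf) B R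
    exact ⟨G, Set.subset_compl_iff_disjoint_right.2 (Finset.disjoint_coe.2 hGB), hG⟩
  obtain ⟨_, ⟨U, hUB, l, hl, rfl⟩, hwz⟩ := Metric.mem_closure_iff.1 (hdense w) ε hε
  obtain ⟨G, hGU, hG⟩ := exists_subset_norm_sum_sub_sum_smul_le U hε.le
    (fun n hn => hB n (hUB hn)) hl
  refine ⟨G, Finset.disjoint_left.2 fun n hn => hUB (hGU hn), ?_⟩
  calc ‖∑ n ∈ G, A n - w‖ ≤ ‖∑ n ∈ G, A n - ∑ n ∈ U, l n • A n‖ + ‖∑ n ∈ U, l n • A n - w‖ :=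
        norm_sub_le_norm_sub_add_norm_sub _ _ _
    _ ≤ finrank ℝ E * ε + ε := by
        gcongr
        rw [← dist_eq_norm, dist_comm]; exact hwz.le
    _ = (finrank ℝ E + 1) * ε := by ring

theorem exists_block [DecidableEq ι] (hA : Tendsto A cofinite (𝓝 0))
    (hdiv : ∀ f : E →L[ℝ] ℝ, f ≠ 0 → ¬Summable fun n => (f (A n))⁺) (v : E) {L : List ι}
    (hL : L.Nodup) {m : ι} (hm : m ∉ L) {ε : ℝ} (hε : 0 < ε) :
    ∃ M : List ι, (L ++ M).Nodup ∧ m ∈ M ∧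
      ‖((L ++ M).map A).sum - v‖ ≤ (finrank ℝ E + 1) * ε ∧
      ∀ P, P <+: M → ‖((L ++ P).map A).sum - v‖ ≤
        2 * (‖(L.map A).sum - v‖ + ‖A m‖) + (2 * finrank ℝ E + 1) * ε := by
  set D : ℝ := (finrank ℝ E : ℝ)
  have hlarge : {n | ¬‖A n‖ ≤ ε}.Finite := by
    simpa [Filter.eventually_cofinite] using hA.eventually (Metric.closedBall_mem_nhds 0 hε)
  set s := (L.map A).sum
  set r := ‖s + A m - v‖
  obtain ⟨G, hGB, hG⟩ := exists_disjoint_norm_sum_sub_le hdiv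
    (B := insert m L.toFinset ∪ hlarge.toFinset) hε (fun n hn => by simp at hn; exact hn.2.2)
    (v - (s + A m))
  have hGB' : ∀ n ∈ G, n ≠ m ∧ n ∉ L ∧ ‖A n‖ ≤ ε := fun n hn => by
    simpa using Finset.disjoint_left.1 hGB hn
  have hGnorm : ‖∑ n ∈ G, A n‖ ≤ r + (D + 1) * ε := by
    have hw : ‖v - (s + A m)‖ = r := norm_sub_rev _ _
    have := norm_add_le (∑ n ∈ G, A n - (v - (s + A m))) (v - (s + A m))
    rw [sub_add_cancel] at this
    linarith
  obtain ⟨LG, hLG, hLGG, hLGb⟩ := exists_list_prefix_sums_le hε.le G (fun n hn => (hGB' n hn).2.2)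
    hGnorm
  have hLG' : ∀ n ∈ LG, n ≠ m ∧ n ∉ L := fun n hn =>
    (hGB' n (hLGG ▸ List.mem_toFinset.2 hn)).imp_right And.left
  have hsumG : (LG.map A).sum = ∑ n ∈ G, A n := by rw [← hLGG, List.sum_toFinset _ hLG]
  refine ⟨m :: LG, ?_, List.mem_cons_self, ?_, fun P hP => ?_⟩
  · refine List.nodup_append.2 ⟨hL, List.nodup_cons.2 ⟨fun h => (hLG' m h).1 rfl, hLG⟩, ?_⟩
    rintro a ha b hb rfl
    rcases List.mem_cons.1 hb with rfl | hb
    exacts [hm ha, (hLG' a hb).2 ha]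
  · have : ((L ++ m :: LG).map A).sum - v = ∑ n ∈ G, A n - (v - (s + A m)) := by
      simp [s, hsumG]; abel
    rw [this]; exact hG
  have hr : r ≤ ‖s - v‖ + ‖A m‖ := by
    simpa only [sub_add_eq_add_sub] using norm_add_le (s - v) (A m)
  rcases List.prefix_cons_iff.1 hP with rfl | ⟨Q, rfl, hQ⟩
  · have : 0 ≤ (2 * D + 1) * ε := by positivity
    simp only [List.append_nil]
    linarith [norm_nonneg (A m), norm_nonneg (s - v)]
  · have hQb := hLGb Q hQ
    have : ((L ++ m :: Q).map A).sum - v = (s + A m - v) + (Q.map A).sum := by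
      simp [s]; abel
    rw [this]
    calc _ ≤ r + ‖(Q.map A).sum‖ := norm_add_le _ _
      _ ≤ 2 * (‖s - v‖ + ‖A m‖) + (2 * D + 1) * ε := by linarith

end Density

theorem exists_seq_of_forall_exists_succ {α : Type*} (P : ℕ → α → Prop) (R : ℕ → α → α → Prop)
    {x₀ : α} (h₀ : P 0 x₀) (h : ∀ k x, P k x → ∃ y, P (k + 1) y ∧ R k x y) :
    ∃ f : ℕ → α, ∀ k, P k (f k) ∧ R k (f k) (f (k + 1)) := by
  choose g hg using h
  let F : ∀ k, {x // P k x} := fun k =>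
    Nat.rec (motive := fun k => {x // P k x}) ⟨x₀, h₀⟩ (fun k x => ⟨g k x x.2, (hg k x x.2).1⟩) k
  exact ⟨fun k => F k, fun k => ⟨(F k).2, (hg k _ (F k).2).2⟩⟩

theorem exists_equiv_of_prefix_chain {α : Type*} {X : ℕ → List α} (hpre : ∀ k, X k <+: X (k + 1))
    (hnd : ∀ k, (X k).Nodup) (hcov : ∀ a, ∃ k, a ∈ X k) (hlen : ∀ n, ∃ k, n < (X k).length) :
    ∃ p : ℕ ≃ α, ∀ k, (List.range (X k).length).map p = X k := by
  have hchain : ∀ j k, j ≤ k → X j <+: X k := fun j k hjk =>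
    Nat.le_induction (List.prefix_refl _) (fun k _ ih => ih.trans (hpre k)) k hjk
  have hget : ∀ j k n (hj : n < (X j).length) (hk : n < (X k).length), (X j)[n] = (X k)[n] := by
    intro j k n hj hk
    rcases le_total j k with h | h
    exacts [(hchain j k h).getElem hj, ((hchain k j h).getElem hk).symm]
  choose K hK using hlen
  set p : ℕ → α := fun n => (X (K n))[n]'(hK n)
  have hp : ∀ k n (h : n < (X k).length), p n = (X k)[n] := fun k n h => hget _ _ _ _ _
  have hinj : Function.Injective p := by
    intro n n' hnn'
    set k := max (K n) (K n')
    have hn : n < (X k).length :=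
      (hK n).trans_le (hchain _ _ (le_max_left _ _)).length_le
    have hn' : n' < (X k).length :=
      (hK n').trans_le (hchain _ _ (le_max_right _ _)).length_le
    rwa [hp k n hn, hp k n' hn', (hnd k).getElem_inj_iff] at hnn'
  have hsurj : Function.Surjective p := by
    intro a
    obtain ⟨k, hk⟩ := hcov a
    obtain ⟨n, hn, rfl⟩ := List.mem_iff_getElem.1 hk
    exact ⟨n, hp k n hn⟩
  refine ⟨Equiv.ofBijective p ⟨hinj, hsurj⟩, fun k => List.ext_getElem (by simp) fun n h₁ h₂ => ?_⟩
  rw [List.getElem_map, List.getElem_range]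
  exact hp k n h₂

theorem tendsto_of_dist_le_on_blocks {α : Type*} [PseudoMetricSpace α] {u : ℕ → α} {v : α}
    {b : ℕ → ℕ} (hb : StrictMono b) {δ : ℕ → ℝ} (hδ : Tendsto δ atTop (𝓝 0))
    (h : ∀ k N, b k ≤ N → N ≤ b (k + 1) → dist (u N) v ≤ δ k) :
    Tendsto u atTop (𝓝 v) := by
  refine Metric.tendsto_atTop.2 fun η hη => ?_
  obtain ⟨K, hK⟩ := eventually_atTop.1 (hδ.eventually (gt_mem_nhds hη))
  refine ⟨b K, fun N hN => ?_⟩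
  have hKN : K ≤ N := (hb.id_le K).trans hN
  set k := Nat.findGreatest (fun k => b k ≤ N) N
  have hbk : b k ≤ N := Nat.findGreatest_spec (P := fun k => b k ≤ N) hKN hN
  have hkK : K ≤ k := Nat.le_findGreatest hKN hN
  have hbk' : N ≤ b (k + 1) := by
    by_contra! hlt
    have hk1 : k + 1 ≤ N := (hb.id_le _).trans hlt.le
    exact Nat.findGreatest_is_greatest (Nat.lt_succ_self k) hk1 hlt.le
  exact (h k N hbk hbk').trans_lt (hK k hkK)

theorem tendsto_zero_of_tendsto_sum_range {G : Type*} [AddCommGroup G] [TopologicalSpace G]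
    [IsTopologicalAddGroup G] {A : ℕ → G} {σ : G}
    (h : Tendsto (fun N => ∑ n ∈ Finset.range N, A n) atTop (𝓝 σ)) : Tendsto A atTop (𝓝 0) := by
  simpa [Finset.sum_range_succ] using (h.comp (tendsto_add_atTop_nat 1)).sub h

theorem not_summable_posPart_of_tendsto_sum_range {y : ℕ → ℝ} {σ : ℝ}
    (hy : Tendsto (fun N => ∑ n ∈ Finset.range N, y n) atTop (𝓝 σ))
    (habs : ¬Summable fun n => |y n|) : ¬Summable fun n => (y n)⁺ := by
  intro hpos
  have habs_eq : ∀ n, |y n| = 2 * (y n)⁺ - y n := fun n => by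
    linarith [posPart_add_negPart (y n), posPart_sub_negPart (y n)]
  refine habs ⟨2 * ∑' n, (y n)⁺ - σ,
    (hasSum_iff_tendsto_nat_of_nonneg (fun n => abs_nonneg _) _).2 ?_⟩
  simp only [habs_eq, Finset.sum_sub_distrib, ← Finset.mul_sum]
  exact (hpos.hasSum.tendsto_sum_nat.const_mul 2).sub hy

section Rearrangement

variable {E : Type*} [NormedAddCommGroup E] [NormedSpace ℝ E] [FiniteDimensional ℝ E] {A : ℕ → E}

theorem exists_next_block (hA : Tendsto A atTop (𝓝 0))
    (hdiv : ∀ f : E →L[ℝ] ℝ, f ≠ 0 → ¬Summable fun n => (f (A n))⁺) (v : E) {k : ℕ}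
    {L : List ℕ} (hL : L.Nodup) (hLk : ∀ j < k, j ∈ L) {ε : ℝ} (hε : 0 < ε) :
    ∃ M : List ℕ, M ≠ [] ∧ (L ++ M).Nodup ∧ (∀ j < k + 1, j ∈ L ++ M) ∧
      ‖((L ++ M).map A).sum - v‖ ≤ (finrank ℝ E + 1) * ε ∧
      ∃ m, k ≤ m ∧ ∀ P, P <+: M → ‖((L ++ P).map A).sum - v‖ ≤
        2 * (‖(L.map A).sum - v‖ + ‖A m‖) + (2 * finrank ℝ E + 1) * ε := by
  have hfresh : ∃ m, m ∉ L := by simpa using L.toFinset.exists_notMem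
  have hm : Nat.find hfresh ∉ L := Nat.find_spec hfresh
  have hkm : k ≤ Nat.find hfresh := by
    by_contra! h
    exact hm (hLk _ h)
  obtain ⟨M, hnd, hmM, hend, hblock⟩ :=
    exists_block (Nat.cofinite_eq_atTop ▸ hA) hdiv v hL hm hε
  refine ⟨M, List.ne_nil_of_mem hmM, hnd, fun j hj => ?_, hend, _, hkm, hblock⟩
  by_cases hjL : j ∈ L
  · exact List.mem_append_left _ hjL
  · have : Nat.find hfresh = j := le_antisymm (Nat.find_min' hfresh hjL) (by omega)
    exact List.mem_append_right _ (this ▸ hmM)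

theorem exists_perm_tendsto_sum_range (hA : Tendsto A atTop (𝓝 0))
    (hdiv : ∀ f : E →L[ℝ] ℝ, f ≠ 0 → ¬Summable fun n => (f (A n))⁺) (v : E) :
    ∃ p : Equiv.Perm ℕ, Tendsto (fun N => ∑ n ∈ Finset.range N, A (p n)) atTop (𝓝 v) := by
  set D : ℝ := (finrank ℝ E : ℝ)
  set ε : ℕ → ℝ := fun k => 1 / (k + 1)
  obtain ⟨X, hX⟩ := exists_seq_of_forall_exists_succ
    (fun k L => L.Nodup ∧ ∀ j < k, j ∈ L)
    (fun k L L' => ∃ M, L' = L ++ M ∧ M ≠ [] ∧ ‖(L'.map A).sum - v‖ ≤ (D + 1) * ε k ∧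
      ∃ m, k ≤ m ∧ ∀ P, P <+: M → ‖((L ++ P).map A).sum - v‖ ≤
        2 * (‖(L.map A).sum - v‖ + ‖A m‖) + (2 * D + 1) * ε k)
    (x₀ := []) ⟨List.nodup_nil, by simp⟩ fun k L hL => by
      obtain ⟨M, hM, hnd, hcov, hend, hblock⟩ :=
        exists_next_block hA hdiv v hL.1 hL.2 (Nat.one_div_pos_of_nat (n := k))
      exact ⟨L ++ M, ⟨hnd, hcov⟩, M, rfl, hM, hend, hblock⟩
  choose hXP M hXM hMne hend m hkm hblock using hX
  set b : ℕ → ℕ := fun k => (X k).length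
  have hb : StrictMono b := strictMono_nat_of_lt_succ fun k => by
    simp [b, hXM k, List.length_pos_iff.2 (hMne k)]
  obtain ⟨p, hp⟩ := exists_equiv_of_prefix_chain (fun k => hXM k ▸ List.prefix_append _ _)
    (fun k => (hXP k).1) (fun a => ⟨a + 1, (hXP (a + 1)).2 a a.lt_succ_self⟩)
    fun n => ⟨n + 1, hb.id_le (n + 1)⟩
  have hsum : ∀ k N, N ≤ b k → ∑ n ∈ Finset.range N, A (p n) = (((X k).take N).map A).sum := by
    intro k N hN
    rw [← hp k, ← List.map_take, List.take_range, min_eq_left hN, List.map_map,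
      ← List.sum_toFinset _ List.nodup_range, List.toFinset_range]
    rfl
  refine ⟨p, tendsto_of_dist_le_on_blocks hb
    (δ := fun k => 2 * (‖((X k).map A).sum - v‖ + ‖A (m k)‖) + (2 * D + 1) * ε k) ?_
    fun k N hkN hNk => ?_⟩
  · have h1 : Tendsto (fun k => ‖((X k).map A).sum - v‖) atTop (𝓝 0) := by
      rw [← tendsto_add_atTop_iff_nat 1]
      refine squeeze_zero (fun _ => norm_nonneg _) (fun k => hend k) ?_
      simpa [ε] using tendsto_one_div_add_atTop_nhds_zero_nat.const_mul (D + 1)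
    have h2 : Tendsto (fun k => ‖A (m k)‖) atTop (𝓝 0) := by
      simpa using (hA.comp (tendsto_atTop_mono hkm tendsto_id)).norm
    simpa [ε] using ((h1.add h2).const_mul 2).add
      (tendsto_one_div_add_atTop_nhds_zero_nat.const_mul (2 * D + 1))
  · rw [dist_eq_norm, hsum (k + 1) N hNk, hXM k, List.take_append, List.take_of_length_le hkN]
    exact hblock k _ (List.take_prefix _ _)

end Rearrangement

theorem not_summable_posPart_of_independent {d : ℕ} {a : Fin d → ℕ → ℝ}
    (hcc : ∀ i, CondConv (a i))
    (hind : ∀ c : Fin d → ℝ, (Summable fun n => |∑ i, c i * a i n|) → c = 0)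
    {f : (Fin d → ℝ) →L[ℝ] ℝ} (hf : f ≠ 0) : ¬Summable fun n => (f fun i => a i n)⁺ := by
  choose σ hσ using fun i => (hcc i).1
  set c : Fin d → ℝ := fun i => f fun j => if i = j then 1 else 0
  have hfc : ∀ x, f x = ∑ i, c i * x i := fun x => by
    simpa [c, mul_comm] using LinearMap.pi_apply_eq_sum_univ f.toLinearMap x
  have hsum : Tendsto (fun N => ∑ n ∈ Finset.range N, fun i => a i n) atTop (𝓝 σ) :=
    tendsto_pi_nhds.2 fun i => by simpa [Finset.sum_apply] using hσ i
  refine not_summable_posPart_of_tendsto_sum_range (σ := f σ)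
    (((f.continuous.tendsto σ).comp hsum).congr fun N => map_sum f _ _) fun hs => hf ?_
  have hc : c = 0 := hind c (by simpa [hfc] using hs)
  exact ContinuousLinearMap.ext fun x => by simp [hfc x, hc]

theorem levy_steinitz_independent_general (d : ℕ) (a : Fin d → ℕ → ℝ)
    (hcc : ∀ i, CondConv (a i))
    (hind : ∀ c : Fin d → ℝ, (Summable fun n => |∑ i, c i * a i n|) → c = 0)
    (v : Fin d → ℝ) :
    ∃ p : Equiv.Perm ℕ, ∀ i,
      Tendsto (fun N => ∑ n ∈ Finset.range N, a i (p n)) atTop (nhds (v i)) := by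
  have hA : Tendsto (fun n i => a i n) atTop (𝓝 0) :=
    tendsto_pi_nhds.2 fun i => tendsto_zero_of_tendsto_sum_range (hcc i).1.choose_spec
  obtain ⟨p, hp⟩ := exists_perm_tendsto_sum_range hA
    (fun f hf => not_summable_posPart_of_independent hcc hind hf) v
  exact ⟨p, fun i => by simpa [Finset.sum_apply] using tendsto_pi_nhds.1 hp i⟩

/-- Lévy–Steinitz for independent finite sequences: if `K(ā) = {0}` then every
vector `v ∈ ℝ^d` is attained by some rearrangement. -/
theorem levy_steinitz_independent (d : ℕ) (hd : 0 < d) (a : Fin d → ℕ → ℝ)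
    (hcc : ∀ i, CondConv (a i))
    (hind : ∀ c : Fin d → ℝ, (Summable fun n => |∑ i, c i * a i n|) → c = 0)
    (v : Fin d → ℝ) :
    ∃ p : Equiv.Perm ℕ, ∀ i,
      Tendsto (fun N => ∑ n ∈ Finset.range N, a i (p n)) atTop (nhds (v i)) :=
  levy_steinitz_independent_general d a hcc hind v
end

section
/- (Polygonal Confinement Theorem, Steinitz) For each positive integer d there exists a constant C_d such that: for every positive integer n and all vectors v_m ∈ ℝ^d (m < n), if Σ_{m<n} v_m = 0 and ‖v_m‖ ≤ 1 for all m < n, then there is a permutation p of {1, …, n−1} such that ‖v_0 + Σ_{m∈k∖{0}} v_{p(m)}‖ ≤ C_d for every k ≤ n. -/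
/-!
Grinberg–Sevastyanov. Call a finite set `A` of vectors in a space of dimension `d` balanced if
it carries weights `a i ∈ [0, 1]` with `∑ a i = #A - d` and `∑ a i • v i = 0`. Then
`‖∑ v i‖ = ‖∑ (1 - a i) • v i‖ ≤ d`. A balanced set with more than `d` elements stays balanced
after removing a suitable element: scale the weights to total `#A - d - 1` and slide them along
lines inside the polytope of admissible weights until at most `d + 1` of them are fractional;
since the weights fall `d + 1` short of `#A`, one of them is then `0`. The whole family is
balanced (with constant weights, as its sum is `0`), so removing elements one at a time and
listing them in reverse order gives an enumeration whose partial sums all have norm at most `d`.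
Bringing `v 0` to the front costs at most `2`.
-/

open Finset Module Equiv

noncomputable def fractionalIndices {ι : Type*} (A : Finset ι) (b : ι → ℝ) : Finset ι :=
  {i ∈ A | b i ∈ Set.Ioo 0 1}

lemma mem_fractionalIndices {ι : Type*} {A : Finset ι} {b : ι → ℝ} {i : ι} :
    i ∈ fractionalIndices A b ↔ i ∈ A ∧ b i ∈ Set.Ioo 0 1 :=
  mem_filter

lemma exists_add_mul_mem_Icc_notMem_Ioo {ι : Type*} {F : Finset ι} {a x : ι → ℝ}
    (ha : ∀ i ∈ F, a i ∈ Set.Icc (0 : ℝ) 1) (hx : ∃ i ∈ F, x i ≠ 0) :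
    ∃ t : ℝ, (∀ i ∈ F, a i + t * x i ∈ Set.Icc (0 : ℝ) 1) ∧
      ∃ i ∈ F, a i + t * x i ∉ Set.Ioo (0 : ℝ) 1 := by
  obtain ⟨i₁, hi₁, hxi₁⟩ := hx
  -- the time at which `a i + t * x i` reaches the end of `[0, 1]` it moves towards
  set hit : ι → ℝ := fun i ↦ (if 0 < x i then 1 - a i else a i) / |x i|
  have hit_mul : ∀ i, x i ≠ 0 → hit i * x i = if 0 < x i then 1 - a i else -a i := by
    intro i hxi
    rcases lt_or_gt_of_ne hxi with hneg | hpos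
    · simp only [hit, if_neg hneg.not_gt, abs_of_neg hneg]
      field_simp
    · simp only [hit, if_pos hpos, abs_of_pos hpos]
      field_simp
  obtain ⟨i₀, hi₀, hmin⟩ :=
    (F.filter (x · ≠ 0)).exists_min_image hit ⟨i₁, mem_filter.2 ⟨hi₁, hxi₁⟩⟩
  obtain ⟨hi₀F, hxi₀⟩ := mem_filter.1 hi₀
  have hit_nonneg : 0 ≤ hit i₀ := by
    obtain ⟨h0, h1⟩ := ha i₀ hi₀F
    exact div_nonneg (by split_ifs <;> linarith) (abs_nonneg _)
  refine ⟨hit i₀, fun i hi ↦ ?_, i₀, hi₀F, ?_⟩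
  · obtain ⟨h0, h1⟩ := ha i hi
    by_cases hxi : x i = 0
    · simpa [hxi] using ha i hi
    have hle := hmin i (mem_filter.2 ⟨hi, hxi⟩)
    have := hit_mul i hxi
    rcases lt_or_gt_of_ne hxi with hneg | hpos
    · rw [if_neg hneg.not_gt] at this
      have := mul_le_mul_of_nonpos_right hle hneg.le
      constructor <;> nlinarith
    · rw [if_pos hpos] at this
      have := mul_le_mul_of_nonneg_right hle hpos.le
      constructor <;> nlinarith
  · have := hit_mul i₀ hxi₀
    split_ifs at this <;> simp [this]

section Vertex

variable {ι W : Type*} [AddCommGroup W] [Module ℝ W] [FiniteDimensional ℝ W]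

lemma exists_card_fractionalIndices_lt (w : ι → W) {A : Finset ι} {a : ι → ℝ}
    (ha : ∀ i ∈ A, a i ∈ Set.Icc (0 : ℝ) 1) (hA : finrank ℝ W < #(fractionalIndices A a)) :
    ∃ b : ι → ℝ, (∀ i ∈ A, b i ∈ Set.Icc (0 : ℝ) 1) ∧
      ∑ i ∈ A, b i • w i = ∑ i ∈ A, a i • w i ∧
      #(fractionalIndices A b) < #(fractionalIndices A a) := by
  set F := fractionalIndices A a
  have hdep : ¬ LinearIndepOn ℝ w (F : Set ι) := fun h ↦
    hA.not_ge (by simpa using h.fintype_card_le_finrank)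
  obtain ⟨x, hxw, hx⟩ := not_linearIndepOn_finset_iff.1 hdep
  obtain ⟨t, hIcc, i₀, hi₀, hi₀b⟩ := exists_add_mul_mem_Icc_notMem_Ioo
    (fun i hi ↦ Set.Ioo_subset_Icc_self (mem_fractionalIndices.1 hi).2) hx
  set b : ι → ℝ := fun i ↦ a i + t * if a i ∈ Set.Ioo (0 : ℝ) 1 then x i else 0
  have hbF : ∀ i ∈ F, b i = a i + t * x i := fun i hi ↦ by
    simp only [b, if_pos (mem_fractionalIndices.1 hi).2]
  have hb : ∀ i ∉ F, i ∈ A → b i = a i := fun i hi hiA ↦ by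
    simp only [b, if_neg fun h ↦ hi (mem_fractionalIndices.2 ⟨hiA, h⟩), mul_zero, add_zero]
  have hxw' : ∑ i ∈ A, (if a i ∈ Set.Ioo (0 : ℝ) 1 then x i else 0) • w i = 0 := by
    simp_rw [ite_smul, zero_smul, ← sum_filter]
    exact hxw
  refine ⟨b, fun i hiA ↦ ?_, ?_, card_lt_card ?_⟩
  · by_cases hi : i ∈ F
    · exact hbF i hi ▸ hIcc i hi
    · exact hb i hi hiA ▸ ha i hiA
  · simp only [b, add_smul, sum_add_distrib, mul_smul, ← smul_sum, hxw', smul_zero, add_zero]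
  · refine (Finset.ssubset_iff_of_subset fun i hi ↦ ?_).2 ⟨i₀, hi₀, fun h ↦ hi₀b ?_⟩
    · obtain ⟨hiA, hib⟩ := mem_fractionalIndices.1 hi
      by_contra hiF
      exact hiF (mem_fractionalIndices.2 ⟨hiA, hb i hiF hiA ▸ hib⟩)
    · exact hbF i₀ hi₀ ▸ (mem_fractionalIndices.1 h).2

theorem exists_card_fractionalIndices_le_finrank (w : ι → W) (A : Finset ι) {a : ι → ℝ}
    (ha : ∀ i ∈ A, a i ∈ Set.Icc (0 : ℝ) 1) :
    ∃ b : ι → ℝ, (∀ i ∈ A, b i ∈ Set.Icc (0 : ℝ) 1) ∧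
      ∑ i ∈ A, b i • w i = ∑ i ∈ A, a i • w i ∧ #(fractionalIndices A b) ≤ finrank ℝ W := by
  induction hn : #(fractionalIndices A a) using Nat.strong_induction_on generalizing a with
  | _ n ih =>
  by_cases hle : n ≤ finrank ℝ W
  · exact ⟨a, ha, rfl, hn ▸ hle⟩
  obtain ⟨b, hb, hbw, hlt⟩ := exists_card_fractionalIndices_lt w ha (hn ▸ not_le.1 hle)
  obtain ⟨c, hc, hcw, hcard⟩ := ih _ (hn ▸ hlt) hb rfl
  exact ⟨c, hc, hcw.trans hbw, hcard⟩

theorem exists_card_fractionalIndices_le_finrank_add_one (v : ι → W) (A : Finset ι)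
    {a : ι → ℝ} (ha : ∀ i ∈ A, a i ∈ Set.Icc (0 : ℝ) 1) :
    ∃ b : ι → ℝ, (∀ i ∈ A, b i ∈ Set.Icc (0 : ℝ) 1) ∧ ∑ i ∈ A, b i = ∑ i ∈ A, a i ∧
      ∑ i ∈ A, b i • v i = ∑ i ∈ A, a i • v i ∧
      #(fractionalIndices A b) ≤ finrank ℝ W + 1 := by
  obtain ⟨b, hb, hbw, hcard⟩ :=
    exists_card_fractionalIndices_le_finrank (fun i ↦ ((1 : ℝ), v i)) A ha
  refine ⟨b, hb, ?_, ?_, ?_⟩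
  · simpa [Prod.fst_sum] using congrArg Prod.fst hbw
  · simpa [Prod.snd_sum] using congrArg Prod.snd hbw
  · rwa [finrank_prod, finrank_self, add_comm] at hcard

end Vertex

lemma exists_eq_zero_of_le_sum_one_sub {ι : Type*} {A : Finset ι} {b : ι → ℝ}
    (hb : ∀ i ∈ A, b i ∈ Set.Icc (0 : ℝ) 1) {m : ℕ} (hm : 0 < m)
    (hcard : #(fractionalIndices A b) ≤ m) (hsum : (m : ℝ) ≤ ∑ i ∈ A, (1 - b i)) :
    ∃ i ∈ A, b i = 0 := by
  by_contra! hb0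
  have hF : ∑ i ∈ fractionalIndices A b, (1 - b i) = ∑ i ∈ A, (1 - b i) :=
    sum_filter_of_ne fun i hi h1 ↦
      ⟨(hb i hi).1.lt_of_ne' (hb0 i hi), (hb i hi).2.lt_of_ne fun h ↦ h1 (by rw [h, sub_self])⟩
  rcases (fractionalIndices A b).eq_empty_or_nonempty with hempty | hne
  · rw [hempty, sum_empty] at hF
    have : (0 : ℝ) < m := by exact_mod_cast hm
    linarith
  · have hlt : ∑ i ∈ fractionalIndices A b, (1 - b i) < #(fractionalIndices A b) := by
      rw [← nsmul_one, ← sum_const]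
      exact sum_lt_sum_of_nonempty hne fun i hi ↦ by linarith [(mem_fractionalIndices.1 hi).2.1]
    have : ((#(fractionalIndices A b) : ℕ) : ℝ) ≤ m := by exact_mod_cast hcard
    linarith

section Balanced

variable {ι V : Type*} [NormedAddCommGroup V] [NormedSpace ℝ V]

/-- The subtraction `#A - finrank ℝ V` is truncated, so every set of at most `finrank ℝ V`
vectors has balancing weights, namely `0`. -/
def HasBalancingWeights (v : ι → V) (A : Finset ι) : Prop :=
  ∃ a : ι → ℝ, (∀ i ∈ A, a i ∈ Set.Icc (0 : ℝ) 1) ∧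
    ∑ i ∈ A, a i = ((#A - finrank ℝ V : ℕ) : ℝ) ∧ ∑ i ∈ A, a i • v i = 0

namespace HasBalancingWeights

variable {v : ι → V} {A : Finset ι}

lemma of_card_le (hA : #A ≤ finrank ℝ V) : HasBalancingWeights v A :=
  ⟨0, fun _ _ ↦ ⟨le_rfl, zero_le_one⟩, by simp [Nat.sub_eq_zero_of_le hA], by simp⟩

lemma of_sum_eq_zero (h : ∑ i ∈ A, v i = 0) : HasBalancingWeights v A := by
  rcases A.eq_empty_or_nonempty with rfl | hne
  · exact of_card_le (by simp)
  have hA : (0 : ℝ) < #A := by exact_mod_cast hne.card_pos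
  have hle : ((#A - finrank ℝ V : ℕ) : ℝ) ≤ #A := by exact_mod_cast Nat.sub_le _ _
  refine ⟨fun _ ↦ ((#A - finrank ℝ V : ℕ) : ℝ) / #A, fun _ _ ↦ ⟨by positivity, ?_⟩, ?_, ?_⟩
  · exact (div_le_one hA).2 hle
  · rw [sum_const, nsmul_eq_mul]
    field_simp
  · rw [← smul_sum, h, smul_zero]

lemma norm_sum_le (hA : HasBalancingWeights v A) (hv : ∀ i ∈ A, ‖v i‖ ≤ 1) :
    ‖∑ i ∈ A, v i‖ ≤ finrank ℝ V := by
  obtain ⟨a, ha, hsum, hav⟩ := hA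
  have hcard : (#A : ℝ) ≤ ((#A - finrank ℝ V : ℕ) : ℝ) + finrank ℝ V := by
    exact_mod_cast (by omega : #A ≤ #A - finrank ℝ V + finrank ℝ V)
  calc ‖∑ i ∈ A, v i‖ = ‖∑ i ∈ A, (1 - a i) • v i‖ := by
        simp only [sub_smul, one_smul, sum_sub_distrib, hav, sub_zero]
    _ ≤ ∑ i ∈ A, (1 - a i) := norm_sum_le_of_le _ fun i hi ↦ by
        rw [norm_smul, Real.norm_of_nonneg (sub_nonneg.2 (ha i hi).2)]
        exact mul_le_of_le_one_right (sub_nonneg.2 (ha i hi).2) (hv i hi)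
    _ ≤ finrank ℝ V := by
        rw [sum_sub_distrib, hsum, sum_const, nsmul_one]
        linarith

lemma exists_erase [DecidableEq ι] [FiniteDimensional ℝ V] (hA : HasBalancingWeights v A)
    (hne : A.Nonempty) : ∃ i ∈ A, HasBalancingWeights v (A.erase i) := by
  by_cases hle : #A ≤ finrank ℝ V
  · obtain ⟨i, hi⟩ := hne
    exact ⟨i, hi, of_card_le (card_erase_le.trans hle)⟩
  obtain ⟨a, ha, hsum, hav⟩ := hA
  have hd : (finrank ℝ V : ℝ) + 1 ≤ #A := by exact_mod_cast not_le.1 hle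
  rw [Nat.cast_sub (not_le.1 hle).le] at hsum
  set r : ℝ := (#A - 1 - finrank ℝ V) / (#A - finrank ℝ V)
  have hr : r ∈ Set.Icc (0 : ℝ) 1 :=
    ⟨div_nonneg (by linarith) (by linarith), (div_le_one (by linarith)).2 (by linarith)⟩
  obtain ⟨b, hb, hbsum, hbv, hcard⟩ := exists_card_fractionalIndices_le_finrank_add_one v A
    (a := fun i ↦ r * a i)
    fun i hi ↦ ⟨mul_nonneg hr.1 (ha i hi).1, mul_le_one₀ hr.2 (ha i hi).1 (ha i hi).2⟩
  rw [← mul_sum, hsum, div_mul_cancel₀ _ (by linarith)] at hbsum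
  simp only [mul_smul, ← smul_sum, hav, smul_zero] at hbv
  obtain ⟨i, hi, hbi⟩ := exists_eq_zero_of_le_sum_one_sub hb (Nat.succ_pos _) hcard (by
    rw [sum_sub_distrib, hbsum, sum_const, nsmul_one]; push_cast; linarith)
  refine ⟨i, hi, b, fun j hj ↦ hb j (mem_of_mem_erase hj), ?_, ?_⟩
  · rw [← add_sum_erase A b hi, hbi, zero_add] at hbsum
    rw [hbsum, card_erase_of_mem hi, Nat.sub_right_comm, Nat.cast_sub (by omega),
      Nat.cast_sub (by omega)]
    push_cast
    ring
  · rwa [← add_sum_erase A _ hi, hbi, zero_smul, zero_add] at hbv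

end HasBalancingWeights

end Balanced

lemma map_range_card_eq {A : Finset ℕ} {σ : Perm ℕ} (hσ : ∀ m < #A, σ m ∈ A) :
    (range #A).map σ.toEmbedding = A :=
  eq_of_subset_of_card_le (fun i hi ↦ by
    obtain ⟨m, hm, rfl⟩ := mem_map.1 hi
    exact hσ m (mem_range.1 hm)) (by simp)

lemma sum_range_card_comp_perm {M : Type*} [AddCommMonoid M] (f : ℕ → M) {A : Finset ℕ}
    {σ : Perm ℕ} (hσ : ∀ m < #A, σ m ∈ A) : ∑ m ∈ range #A, f (σ m) = ∑ i ∈ A, f i := by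
  conv_rhs => rw [← map_range_card_eq hσ, sum_map]
  rfl

theorem HasBalancingWeights.exists_perm_norm_sum_range_le {V : Type*} [NormedAddCommGroup V]
    [NormedSpace ℝ V] [FiniteDimensional ℝ V] {v : ℕ → V} {A : Finset ℕ}
    (hA : HasBalancingWeights v A) (hv : ∀ i ∈ A, ‖v i‖ ≤ 1) :
    ∃ σ : Perm ℕ, (∀ m < #A, σ m ∈ A) ∧ ∀ k ≤ #A, ‖∑ m ∈ range k, v (σ m)‖ ≤ finrank ℝ V := by
  induction hN : #A generalizing A with
  | zero => exact ⟨1, by simp, fun k hk ↦ by simp [Nat.le_zero.1 hk]⟩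
  | succ N ih =>
  obtain ⟨i, hi, hAi⟩ := hA.exists_erase (card_pos.1 (by omega))
  obtain ⟨σ, hσ, hbound⟩ := ih hAi (fun j hj ↦ hv j (mem_of_mem_erase hj))
    (by rw [card_erase_of_mem hi, hN]; rfl)
  have hτ : ∀ m < N, (swap (σ N) i * σ) m = σ m := fun m hm ↦
    swap_apply_of_ne_of_ne (σ.injective.ne hm.ne) (ne_of_mem_erase (hσ m hm))
  have hτA : ∀ m < N + 1, (swap (σ N) i * σ) m ∈ A := fun m hm ↦ by
    rcases Nat.lt_succ_iff_lt_or_eq.1 hm with hm | rfl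
    · exact hτ m hm ▸ mem_of_mem_erase (hσ m hm)
    · simpa using hi
  refine ⟨swap (σ N) i * σ, hτA, fun k hk ↦ ?_⟩
  rcases Nat.le_succ_iff.1 hk with hk | hk
  · rw [sum_congr rfl fun m hm ↦ by rw [hτ m ((mem_range.1 hm).trans_le hk)]]
    exact hbound k hk
  · rw [← hN] at hτA
    rw [show k = #A by omega, sum_range_card_comp_perm v hτA]
    exact hA.norm_sum_le hv

lemma bijOn_Ico_one_of_map_zero {p : Perm ℕ} {n : ℕ} (hp : ∀ m < n, p m < n) (hp0 : p 0 = 0) :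
    Set.BijOn p (Set.Ico 1 n) (Set.Ico 1 n) := by
  refine ((Set.finite_Ico 1 n).injOn_iff_bijOn_of_mapsTo fun m hm ↦ ?_).1 p.injective.injOn
  refine ⟨Nat.one_le_iff_ne_zero.2 fun h ↦ ?_, hp m hm.2⟩
  exact (Nat.one_le_iff_ne_zero.1 hm.1) (p.injective (h.trans hp0.symm))

lemma norm_add_sum_Ico_swap_le {E : Type*} [SeminormedAddCommGroup E] {v : ℕ → E} {σ : Perm ℕ}
    {j k : ℕ} {D : ℝ} (hσj : σ j = 0) (h0 : ‖v 0‖ ≤ 1) (hσ0 : ‖v (σ 0)‖ ≤ 1)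
    (hD : ‖∑ m ∈ range k, v (σ m)‖ ≤ D) :
    ‖v 0 + ∑ m ∈ Ico 1 k, v ((σ * swap 0 j) m)‖ ≤ D + 2 := by
  rcases Nat.eq_zero_or_pos k with rfl | hk
  · rw [range_zero, sum_empty, norm_zero] at hD
    rw [Ico_eq_empty_of_le zero_le_one, sum_empty, add_zero]
    linarith
  rcases le_or_gt k j with hkj | hjk
  · have hsum : ∑ m ∈ Ico 1 k, v ((σ * swap 0 j) m) = ∑ m ∈ Ico 1 k, v (σ m) :=
      sum_congr rfl fun m hm ↦ by
        have := mem_Ico.1 hm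
        rw [Perm.mul_apply, swap_apply_of_ne_of_ne (by omega) (by omega)]
    calc ‖v 0 + ∑ m ∈ Ico 1 k, v ((σ * swap 0 j) m)‖
        = ‖v 0 - v (σ 0) + ∑ m ∈ range k, v (σ m)‖ := by
          rw [hsum, sum_range_eq_add_Ico _ hk]; abel_nf
      _ ≤ ‖v 0‖ + ‖v (σ 0)‖ + ‖∑ m ∈ range k, v (σ m)‖ :=
          (norm_add_le _ _).trans (add_le_add_left (norm_sub_le _ _) _)
      _ ≤ D + 2 := by linarith
  · have hsum : ∑ m ∈ range k, v ((σ * swap 0 j) m) = ∑ m ∈ range k, v (σ m) :=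
      sum_equiv (swap 0 j) (fun m ↦ by simp only [mem_range, swap_apply_def]; split_ifs <;> omega)
        fun m _ ↦ by rw [Perm.mul_apply]
    have hp0 : (σ * swap 0 j) 0 = 0 := by simpa using hσj
    rw [sum_range_eq_add_Ico (fun m ↦ v ((σ * swap 0 j) m)) hk, hp0] at hsum
    rw [hsum]
    linarith

theorem polygonal_confinement_general (d : ℕ) :
    ∃ C : ℝ, ∀ n : ℕ, 0 < n → ∀ v : ℕ → EuclideanSpace ℝ (Fin d),
      (∑ m ∈ Finset.range n, v m) = 0 → (∀ m < n, ‖v m‖ ≤ 1) →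
      ∃ p : ℕ → ℕ, Set.BijOn p (Set.Ico 1 n) (Set.Ico 1 n) ∧
        ∀ k ≤ n, ‖v 0 + ∑ m ∈ Finset.Ico 1 k, v (p m)‖ ≤ C := by
  refine ⟨d + 2, fun n hn v hsum hv ↦ ?_⟩
  obtain ⟨σ, hσ, hbound⟩ := (HasBalancingWeights.of_sum_eq_zero hsum).exists_perm_norm_sum_range_le
    fun i hi ↦ hv i (mem_range.1 hi)
  obtain ⟨j, hj, hσj⟩ := mem_map.1 (map_range_card_eq hσ ▸ mem_range.2 hn)
  rw [card_range, mem_range] at hj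
  rw [card_range] at hσ hbound
  rw [finrank_euclideanSpace_fin] at hbound
  have hσn : ∀ m < n, σ m < n := fun m hm ↦ mem_range.1 (hσ m hm)
  refine ⟨⇑(σ * swap 0 j), bijOn_Ico_one_of_map_zero (fun m hm ↦ hσn _ ?_) (by simpa using hσj),
    fun k hk ↦ norm_add_sum_Ico_swap_le hσj (hv 0 hn) (hv _ (hσn 0 hn)) (hbound k hk)⟩
  rw [swap_apply_def]
  split_ifs <;> omega

/-- The Polygonal Confinement Theorem (Steinitz): for each positive `d` there is a
constant `C` such that any finite family of vectors in `ℝ^d` of norm at most `1`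
summing to zero can be rearranged (keeping the first vector first) so that all
partial sums have norm at most `C`. -/
theorem polygonal_confinement (d : ℕ) (hd : 0 < d) :
    ∃ C : ℝ, ∀ n : ℕ, 0 < n → ∀ v : ℕ → EuclideanSpace ℝ (Fin d),
      (∑ m ∈ Finset.range n, v m) = 0 → (∀ m < n, ‖v m‖ ≤ 1) →
      ∃ p : ℕ → ℕ, Set.BijOn p (Set.Ico 1 n) (Set.Ico 1 n) ∧
        ∀ k ≤ n, ‖v 0 + ∑ m ∈ Finset.Ico 1 k, v (p m)‖ ≤ C :=
  polygonal_confinement_general d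
end

section
/- Let ⟨aⁱ : i < ω⟩ be an independent sequence of conditionally convergent real series and let ⟨xᵢ : i < ω⟩ be any sequence of real numbers. Then there is a single permutation p of ℕ such that, for each i ∈ ℕ, the series Σ_{j∈ℕ} aⁱ_{p(j)} converges to xᵢ. -/
open Filter

/-!
Fix `d` and put `vₙ = (a⁰ₙ, …, a^{d-1}ₙ) ∈ ℝᵈ`. For every nonzero functional `f` the series
`∑ f(vₙ)` converges (each `aⁱ` does) but not absolutely (independence), so `∑ f(vₙ)⁺ = ∞`.
By Hahn–Banach, the combinations `∑ tₙ vₙ` with `tₙ ∈ [0, 1]` over any tail `n ≥ M` are then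
dense in `ℝᵈ`, and moving `t` to a vertex of the polytope of such coefficients (at most `d` of
them fractional) shows that sums over finite subsets of the tail approximate any vector up to
`d · sup_{n ≥ M} ‖vₙ‖`. The Steinitz lemma orders such a subset so that every partial sum stays
within `2 (d + 1) sup ‖vₙ‖` of the segment from `0` to the whole sum.

The permutation is built in stages: stage `t` appends the least index not used so far, followed
by a block of far-out indices, ordered as above, that brings the first `t + 1` series within
`1 / (t + 1)` of their targets; inside the block the partial sums exceed the previous error by at
most one term and `1 / (t + 1)`. Since the terms tend to `0`, every rearranged series converges
to its target.
-/

open Set Topology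
open scoped Finset

theorem List.norm_sum_map_le_length_mul {ι E : Type*} [SeminormedAddCommGroup E] {l : List ι}
    {w : ι → E} {δ : ℝ} (hw : ∀ n ∈ l, ‖w n‖ ≤ δ) : ‖(l.map w).sum‖ ≤ l.length * δ := by
  induction l with
  | nil => simp
  | cons n l ih =>
    simp only [List.map_cons, List.sum_cons, List.length_cons, Nat.cast_succ]
    have := norm_add_le (w n) (l.map w).sum
    linarith [hw n List.mem_cons_self, ih fun m hm => hw m (List.mem_cons_of_mem n hm)]

theorem exists_mem_eq_zero_of_sum_lt {ι : Type*} {A : Finset ι} {ν : ι → ℝ} {D : ℕ}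
    (hν : ∀ n ∈ A, ν n ∈ Icc (0 : ℝ) 1) (hfrac : #{n ∈ A | ν n ∈ Ioo (0 : ℝ) 1} ≤ D)
    (hsum : ∑ n ∈ A, ν n < #A - D) : ∃ n ∈ A, ν n = 0 := by
  by_contra! hne
  have hle : ∀ n ∈ A, (1 : ℝ) ≤ ν n + if ν n ∈ Ioo (0 : ℝ) 1 then 1 else 0 := fun n hn => by
    obtain ⟨h0, h1⟩ := hν n hn
    split_ifs with h
    · linarith [h.1]
    · have : ¬ ν n < 1 := fun h1' => h ⟨h0.lt_of_ne (hne n hn).symm, h1'⟩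
      linarith
  have := Finset.sum_le_sum hle
  rw [Finset.sum_add_distrib, ← Finset.natCast_card_filter, Finset.sum_const, nsmul_one] at this
  have : (#{n ∈ A | ν n ∈ Ioo (0 : ℝ) 1} : ℝ) ≤ D := by exact_mod_cast hfrac
  linarith

section Rounding

variable {ι V : Type*} [NormedAddCommGroup V] [NormedSpace ℝ V]

def coeffPolytope (I : Finset ι) (w : ι → V) (z : V) : Set (ι → ℝ) :=
  univ.pi (fun _ => Icc 0 1) ∩ {s | ∑ n ∈ I, s n • w n = z}

theorem isCompact_coeffPolytope (I : Finset ι) (w : ι → V) (z : V) :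
    IsCompact (coeffPolytope I w z) :=
  (isCompact_univ_pi fun _ => isCompact_Icc).inter_right <|
    isClosed_eq (continuous_finsetSum _ fun n _ => (continuous_apply n).smul continuous_const)
      continuous_const

/-- A linear relation among the vectors with fractional coefficient would move `t` both ways
inside the polytope. -/
theorem linearIndepOn_of_mem_extremePoints_coeffPolytope {I : Finset ι} {w : ι → V} {z : V}
    {t : ι → ℝ} (ht : t ∈ (coeffPolytope I w z).extremePoints ℝ) :
    LinearIndepOn ℝ w (I.filter fun n => t n ∈ Ioo (0 : ℝ) 1 : Finset ι) := by
  classical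
  obtain ⟨htP, htext⟩ := mem_extremePoints.1 ht
  set S := I.filter fun n => t n ∈ Ioo (0 : ℝ) 1
  refine linearIndepOn_finset_iff.2 fun g hg => ?_
  set h : ι → ℝ := fun n => if n ∈ S then g n else 0
  have hsmall : ∀ᶠ s in 𝓝 (0 : ℝ), ∀ n ∈ S, t n + s * g n ∈ Ioo (0 : ℝ) 1 :=
    (eventually_all_finset S).2 fun n hn =>
      (tendsto_const_nhds.add (tendsto_id.mul_const (g n))).eventually
        (isOpen_Ioo.mem_nhds (by simpa using (Finset.mem_filter.1 hn).2))
  obtain ⟨r, hr, hball⟩ := Metric.eventually_nhds_iff.1 hsmall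
  have hmem : ∀ s, |s| < r → t + s • h ∈ coeffPolytope I w z := by
    intro s hs
    refine ⟨fun n _ => ?_, ?_⟩
    · by_cases hn : n ∈ S
      · simpa [h, hn] using Ioo_subset_Icc_self (hball (by simpa using hs) n hn)
      · simpa [h, hn] using htP.1 n trivial
    · have hrel : ∑ n ∈ I, h n • w n = 0 := by
        simp only [h, ite_smul, zero_smul]
        rw [Finset.sum_ite_mem, Finset.inter_eq_right.2 (Finset.filter_subset _ _), hg]
      simp only [Set.mem_ofPred_eq, Pi.add_apply, Pi.smul_apply, smul_eq_mul, add_smul,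
        Finset.sum_add_distrib, mul_smul, ← Finset.smul_sum, hrel, smul_zero, add_zero]
      exact htP.2
  have hseg : t ∈ openSegment ℝ (t + (r / 2) • h) (t + (-(r / 2)) • h) :=
    ⟨1 / 2, 1 / 2, by norm_num, by norm_num, by norm_num, by module⟩
  have hh : (r / 2) • h = 0 := by
    simpa using (htext _ (hmem _ (by rw [abs_of_pos (half_pos hr)]; linarith)) _
      (hmem _ (by rw [abs_neg, abs_of_pos (half_pos hr)]; linarith)) hseg).1
  intro n hn
  simpa [h, hn, hr.ne'] using congrFun hh n

variable [FiniteDimensional ℝ V]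

theorem exists_sum_smul_eq_card_frac_le_finrank (I : Finset ι) (w : ι → V) (t : ι → ℝ)
    (ht : ∀ n ∈ I, t n ∈ Icc (0 : ℝ) 1) :
    ∃ t' : ι → ℝ, (∀ n ∈ I, t' n ∈ Icc (0 : ℝ) 1) ∧
      ∑ n ∈ I, t' n • w n = ∑ n ∈ I, t n • w n ∧
      #{n ∈ I | t' n ∈ Ioo (0 : ℝ) 1} ≤ Module.finrank ℝ V := by
  classical
  have hne : (coeffPolytope I w (∑ n ∈ I, t n • w n)).Nonempty := by
    refine ⟨fun n => if n ∈ I then t n else 0, fun n _ => ?_, ?_⟩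
    · by_cases hn : n ∈ I
      · simpa [hn] using ht n hn
      · simp [hn]
    · exact Finset.sum_congr rfl fun n hn => by simp only [if_pos hn]
  obtain ⟨t', ht'⟩ := (isCompact_coeffPolytope _ _ _).extremePoints_nonempty hne
  have ht'P := (mem_extremePoints.1 ht').1
  refine ⟨t', fun n _ => ht'P.1 n trivial, ht'P.2, ?_⟩
  simpa only [Finset.coe_sort_coe, Fintype.card_coe] using
    (linearIndepOn_of_mem_extremePoints_coeffPolytope ht').linearIndependent.fintype_card_le_finrank

theorem exists_subset_norm_sum_sub_sum_smul_le_s4 (I : Finset ι) (w : ι → V) (t : ι → ℝ)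
    (ht : ∀ n ∈ I, t n ∈ Icc (0 : ℝ) 1) {δ : ℝ} (hδ : 0 ≤ δ) (hw : ∀ n ∈ I, ‖w n‖ ≤ δ) :
    ∃ G ⊆ I, ‖∑ n ∈ G, w n - ∑ n ∈ I, t n • w n‖ ≤ Module.finrank ℝ V * δ := by
  obtain ⟨t', ht', hsum, hcard⟩ := exists_sum_smul_eq_card_frac_le_finrank I w t ht
  set R := I.filter fun n => t' n ∈ Ioo (0 : ℝ) 1
  have hsplit :
      ∑ n ∈ I, t' n • w n = ∑ n ∈ I.filter (t' · = 1), w n + ∑ n ∈ R, t' n • w n := by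
    rw [Finset.sum_filter, Finset.sum_filter, ← Finset.sum_add_distrib]
    refine Finset.sum_congr rfl fun n hn => ?_
    rcases (ht' n hn).1.eq_or_lt with h0 | h0
    · simp [← h0]
    rcases (ht' n hn).2.eq_or_lt with h1 | h1
    · simp [h1]
    · simp [h0, h1, h1.ne]
  refine ⟨I.filter (t' · = 1), Finset.filter_subset _ _, ?_⟩
  rw [← hsum, hsplit, sub_add_cancel_left, norm_neg]
  calc ‖∑ n ∈ R, t' n • w n‖ ≤ ∑ n ∈ R, ‖t' n • w n‖ := norm_sum_le _ _
    _ ≤ ∑ _n ∈ R, δ := Finset.sum_le_sum fun n hn => by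
        obtain ⟨hnI, h0, h1⟩ := by simpa [R] using hn
        rw [norm_smul, Real.norm_of_nonneg h0.le]
        nlinarith [hw n hnI, norm_nonneg (w n)]
    _ ≤ Module.finrank ℝ V * δ := by
        rw [Finset.sum_const, nsmul_eq_mul]
        exact mul_le_mul_of_nonneg_right (by exact_mod_cast hcard) hδ

/-- Scaled down to total weight `#A - 1 - dim V` and rounded, the weights have at most `dim V`
fractional entries, so one of them vanishes. -/
theorem exists_erase_sum_smul_eq [DecidableEq ι] {A : Finset ι} {W : ι → V} {e : V}
    (φ : V →ₗ[ℝ] ℝ) (hφW : ∀ n ∈ A, φ (W n) = 1) (hφe : φ e = 1)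
    (hA : Module.finrank ℝ V < #A) {t : ι → ℝ} (ht : ∀ n ∈ A, t n ∈ Icc (0 : ℝ) 1)
    (hsum : ∑ n ∈ A, t n • W n = ((#A : ℝ) - Module.finrank ℝ V) • e) :
    ∃ n₀ ∈ A, ∃ ν : ι → ℝ, (∀ n ∈ A.erase n₀, ν n ∈ Icc (0 : ℝ) 1) ∧
      ∑ n ∈ A.erase n₀, ν n • W n = ((#(A.erase n₀) : ℝ) - Module.finrank ℝ V) • e := by
  have hAD : (Module.finrank ℝ V : ℝ) + 1 ≤ #A := by exact_mod_cast hA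
  set D : ℝ := (Module.finrank ℝ V : ℝ)
  set ρ := (#A - 1 - D) / (#A - D)
  have hρ : ρ ∈ Icc (0 : ℝ) 1 := ⟨div_nonneg (by linarith) (by linarith),
    (div_le_one (by linarith)).2 (by linarith)⟩
  have hμ : ∀ n ∈ A, ρ * t n ∈ Icc (0 : ℝ) 1 := fun n hn =>
    ⟨mul_nonneg hρ.1 (ht n hn).1, mul_le_one₀ hρ.2 (ht n hn).1 (ht n hn).2⟩
  obtain ⟨ν, hν, hνsum, hνfrac⟩ := exists_sum_smul_eq_card_frac_le_finrank A W _ hμ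
  have hνsum' : ∑ n ∈ A, ν n • W n = ((#A : ℝ) - 1 - D) • e := by
    simp only [hνsum, mul_smul, ← Finset.smul_sum]
    rw [hsum, smul_smul, div_mul_cancel₀ _ (by linarith)]
  have hνφ : ∑ n ∈ A, ν n = #A - 1 - D := by
    have := congrArg φ hνsum'
    rw [map_sum, map_smul, hφe, smul_eq_mul, mul_one] at this
    rw [← this]
    exact Finset.sum_congr rfl fun n hn => by rw [map_smul, hφW n hn, smul_eq_mul, mul_one]
  obtain ⟨n₀, hn₀, hν₀⟩ := exists_mem_eq_zero_of_sum_lt hν hνfrac (by linarith)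
  refine ⟨n₀, hn₀, ν, fun n hn => hν n (Finset.mem_of_mem_erase hn), ?_⟩
  rw [Finset.sum_erase _ (by rw [hν₀, zero_smul]), hνsum', Finset.card_erase_of_mem hn₀,
    Nat.cast_pred (Finset.card_pos.2 ⟨n₀, hn₀⟩)]

end Rounding

section Steinitz

variable {ι F : Type*} [NormedAddCommGroup F] [NormedSpace ℝ F]

theorem norm_sum_sub_card_smul_le {A : Finset ι} {w : ι → F} {c : F} {δ : ℝ} {D : ℕ}
    {t : ι → ℝ} (hw : ∀ n ∈ A, ‖w n‖ ≤ δ) (hc : ‖c‖ ≤ δ) (ht : ∀ n ∈ A, t n ∈ Icc (0 : ℝ) 1)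
    (hsum : ∑ n ∈ A, t n • (w n, (1 : ℝ)) = ((#A : ℝ) - D) • (c, 1)) :
    ‖∑ n ∈ A, w n - (#A : ℝ) • c‖ ≤ 2 * D * δ := by
  have hfst : ∑ n ∈ A, t n • w n = ((#A : ℝ) - D) • c := by
    simpa [Prod.fst_sum] using congrArg Prod.fst hsum
  have hsnd : ∑ n ∈ A, t n = #A - D := by
    simpa [Prod.snd_sum] using congrArg Prod.snd hsum
  have hsplit : ∑ n ∈ A, w n - (#A : ℝ) • c = ∑ n ∈ A, (1 - t n) • w n - (D : ℝ) • c := by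
    simp only [sub_smul, one_smul, Finset.sum_sub_distrib, hfst]
    module
  have hrest : ‖∑ n ∈ A, (1 - t n) • w n‖ ≤ D * δ :=
    calc ‖∑ n ∈ A, (1 - t n) • w n‖ ≤ ∑ n ∈ A, (1 - t n) * δ := by
          refine (norm_sum_le _ _).trans (Finset.sum_le_sum fun n hn => ?_)
          rw [norm_smul, Real.norm_of_nonneg (by linarith [(ht n hn).2])]
          exact mul_le_mul_of_nonneg_left (hw n hn) (by linarith [(ht n hn).2])
      _ = D * δ := by rw [← Finset.sum_mul, Finset.sum_sub_distrib, hsnd]; simp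
  have hDc : ‖(D : ℝ) • c‖ ≤ D * δ := by
    rw [norm_smul, Real.norm_natCast]
    exact mul_le_mul_of_nonneg_left hc (Nat.cast_nonneg D)
  rw [hsplit]
  linarith [norm_sub_le (∑ n ∈ A, (1 - t n) • w n) ((D : ℝ) • c)]

theorem norm_sum_take_sub_smul_le {l : List ι} {w : ι → F} {c : F} {δ : ℝ}
    (hw : ∀ n ∈ l, ‖w n‖ ≤ δ) (hc : ‖c‖ ≤ δ) (j : ℕ) :
    ‖((l.take j).map w).sum - (j : ℝ) • c‖ ≤ 2 * j * δ := by
  have hδ : 0 ≤ δ := (norm_nonneg c).trans hc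
  calc ‖((l.take j).map w).sum - (j : ℝ) • c‖
      ≤ ‖((l.take j).map w).sum‖ + ‖(j : ℝ) • c‖ := norm_sub_le _ _
    _ ≤ j * δ + j * δ := by
        gcongr
        · refine (List.norm_sum_map_le_length_mul fun n hn =>
            hw n (List.mem_of_mem_take hn)).trans ?_
          gcongr
          exact_mod_cast List.length_take_le _ _
        · rw [norm_smul, Real.norm_natCast]
          gcongr
    _ = 2 * j * δ := by ring

variable [DecidableEq ι] [FiniteDimensional ℝ F]

/-- Pairing `wₙ` with `1` makes the weights `t` record both `∑_{n ∈ A} tₙ wₙ = (#A - D) c` and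
`∑_{n ∈ A} tₙ = #A - D`, where `D = dim F + 1`. Such weights pass from `A` to `A` minus a suitable
element, which is put last. -/
theorem exists_nodup_norm_sum_take_sub_smul_le_of_weights (w : ι → F) {c : F} {δ : ℝ}
    (hc : ‖c‖ ≤ δ) (A : Finset ι) (hw : ∀ n ∈ A, ‖w n‖ ≤ δ)
    (ht : Module.finrank ℝ (F × ℝ) < #A → ∃ t : ι → ℝ, (∀ n ∈ A, t n ∈ Icc (0 : ℝ) 1) ∧
      ∑ n ∈ A, t n • (w n, (1 : ℝ)) = ((#A : ℝ) - Module.finrank ℝ (F × ℝ)) • (c, 1)) :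
    ∃ l : List ι, l.Nodup ∧ l.toFinset = A ∧ ∀ j ≤ #A,
      ‖((l.take j).map w).sum - (j : ℝ) • c‖ ≤ 2 * Module.finrank ℝ (F × ℝ) * δ := by
  induction A using Finset.strongInduction with
  | H A ih =>
  by_cases hA : Module.finrank ℝ (F × ℝ) < #A
  · obtain ⟨t, ht01, htsum⟩ := ht hA
    obtain ⟨n₀, hn₀, ν, hν, hνsum⟩ :=
      exists_erase_sum_smul_eq (LinearMap.snd ℝ F ℝ) (fun _ _ => rfl) rfl hA ht01 htsum
    obtain ⟨l, hl, hlA, hlj⟩ := ih _ (Finset.erase_ssubset hn₀)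
      (fun n hn => hw n (Finset.mem_of_mem_erase hn)) fun _ => ⟨ν, hν, hνsum⟩
    have hn₀l : n₀ ∉ l := by simp [← List.mem_toFinset, hlA]
    have hnodup : (l ++ [n₀]).Nodup :=
      List.nodup_append.2 ⟨hl, List.nodup_singleton n₀, fun a ha b hb hab =>
        hn₀l (by simp_all)⟩
    have hfin : (l ++ [n₀]).toFinset = A := by
      rw [List.toFinset_append, hlA]
      simpa using Finset.insert_erase hn₀
    have hlen : l.length + 1 = #A := by
      rw [← List.toFinset_card_of_nodup hl, hlA, Finset.card_erase_add_one hn₀]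
    refine ⟨l ++ [n₀], hnodup, hfin, fun j hj => ?_⟩
    rcases hj.lt_or_eq with hj | rfl
    · rw [List.take_append_of_le_length (by omega)]
      exact hlj j (by rw [Finset.card_erase_of_mem hn₀]; omega)
    · rw [List.take_of_length_le (by simp; omega), ← List.sum_toFinset w hnodup, hfin]
      exact norm_sum_sub_card_smul_le hw hc ht01 htsum
  · refine ⟨A.toList, A.nodup_toList, A.toList_toFinset, fun j hj => ?_⟩
    refine (norm_sum_take_sub_smul_le (fun n hn => hw n (Finset.mem_toList.1 hn)) hc j).trans ?_
    have hδ : 0 ≤ δ := (norm_nonneg c).trans hc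
    have hjD : (j : ℝ) ≤ Module.finrank ℝ (F × ℝ) := by exact_mod_cast hj.trans (not_lt.1 hA)
    gcongr

theorem exists_nodup_norm_sum_take_sub_smul_sum_le (I : Finset ι) (w : ι → F) {δ : ℝ}
    (hδ : 0 ≤ δ) (hw : ∀ n ∈ I, ‖w n‖ ≤ δ) :
    ∃ l : List ι, l.Nodup ∧ l.toFinset = I ∧ ∀ k, ∃ θ ∈ Icc (0 : ℝ) 1,
      ‖((l.take k).map w).sum - θ • ∑ n ∈ I, w n‖ ≤ 2 * (Module.finrank ℝ F + 1) * δ := by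
  set c : F := (#I : ℝ)⁻¹ • ∑ n ∈ I, w n
  have hc : ‖c‖ ≤ δ := by
    rw [norm_smul, norm_inv, Real.norm_natCast]
    rcases (#I).eq_zero_or_pos with h | h
    · simpa [h] using hδ
    · rw [inv_mul_le_iff₀ (by exact_mod_cast h)]
      exact (norm_sum_le _ _).trans (by simpa using Finset.sum_le_sum hw)
  obtain ⟨l, hl, hlI, hlj⟩ :=
    exists_nodup_norm_sum_take_sub_smul_le_of_weights w hc I hw fun hI => by
      refine ⟨fun _ => (#I - Module.finrank ℝ (F × ℝ) : ℝ) / #I, fun n _ => ⟨?_, ?_⟩, ?_⟩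
      · exact div_nonneg (sub_nonneg.2 (by exact_mod_cast hI.le)) (Nat.cast_nonneg _)
      · exact div_le_one_of_le₀ (sub_le_self _ (Nat.cast_nonneg _)) (Nat.cast_nonneg _)
      · have hI0 : (#I : ℝ) ≠ 0 := by exact_mod_cast (Nat.zero_lt_of_lt hI).ne'
        rw [← Finset.smul_sum]
        ext
        · simp [Prod.fst_sum, c, smul_smul, div_eq_mul_inv, mul_comm]
        · simp [Prod.snd_sum, hI0]
  have hlen : l.length = #I := by rw [← List.toFinset_card_of_nodup hl, hlI]
  rw [Module.finrank_prod, Module.finrank_self] at hlj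
  refine ⟨l, hl, hlI, fun k => ⟨min k #I / #I,
    ⟨by positivity, div_le_one_of_le₀ (by simp) (by simp)⟩, ?_⟩⟩
  have := hlj (min k #I) (min_le_right _ _)
  rw [← hlen, ← List.take_take, List.take_length] at this
  simp only [hlen, c, smul_smul, ← div_eq_mul_inv] at this
  exact_mod_cast this

end Steinitz

section Zonotope

def tailCube (M : ℕ) : Set (ℕ →₀ ℝ) := {t | ∀ n, t n ∈ Icc (0 : ℝ) 1 ∧ (n < M → t n = 0)}

theorem convex_tailCube (M : ℕ) : Convex ℝ (tailCube M) := by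
  intro t₁ h₁ t₂ h₂ a b ha hb hab n
  refine ⟨by simpa using convex_Icc (0 : ℝ) 1 (h₁ n).1 (h₂ n).1 ha hb hab, fun hn => ?_⟩
  simp [(h₁ n).2 hn, (h₂ n).2 hn]

theorem dense_linearCombination_image_tailCube {E : Type*} [AddCommGroup E] [Module ℝ E]
    [TopologicalSpace E] [IsTopologicalAddGroup E] [ContinuousSMul ℝ E] [LocallyConvexSpace ℝ E]
    (v : ℕ → E) (hv : ∀ f : StrongDual ℝ E, f ≠ 0 → ¬ Summable fun n => max (f (v n)) 0)
    (M : ℕ) : Dense (Finsupp.linearCombination ℝ v '' tailCube M) := by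
  intro u
  by_contra hu
  obtain ⟨f, u₀, hfZ, hfu⟩ :=
    geometric_hahn_banach_closed_point ((convex_tailCube M).linear_image _).closure
      isClosed_closure hu
  have hu₀ : 0 < u₀ := by
    simpa using hfZ 0 (subset_closure ⟨0, fun n => by simp, map_zero _⟩)
  have hf : f ≠ 0 := by
    rintro rfl
    exact (hu₀.trans hfu).ne (by simp)
  set g : ℕ → ℝ := fun n => max (f (v n)) 0
  have hg : Tendsto (fun N => ∑ n ∈ Finset.range N, g n) atTop atTop :=
    (not_summable_iff_tendsto_nat_atTop_of_nonneg fun n => le_max_right _ _).1 (hv f hf)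
  obtain ⟨N, hNM, hN⟩ := ((eventually_ge_atTop M).and
    (hg.eventually_gt_atTop (u₀ + ∑ n ∈ Finset.range M, g n))).exists
  set S := (Finset.Ico M N).filter fun n => 0 < f (v n)
  have hS : ∑ n ∈ S, Finsupp.single n (1 : ℝ) ∈ tailCube M := fun n => by
    simp only [Finsupp.finsetSum_apply, Finsupp.single_apply, Finset.sum_ite_eq']
    split_ifs with hn
    · exact ⟨by simp, fun h => absurd (Finset.mem_Ico.1 (Finset.mem_filter.1 hn).1).1
        (not_le.2 h)⟩
    · simp
  have hfS : f (∑ n ∈ S, v n) = ∑ n ∈ Finset.Ico M N, g n := by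
    rw [map_sum, Finset.sum_filter]
    refine Finset.sum_congr rfl fun n _ => ?_
    split_ifs with h
    exacts [(max_eq_left h.le).symm, (max_eq_right (not_lt.1 h)).symm]
  have := hfZ (∑ n ∈ S, v n) (subset_closure ⟨_, hS, by simp [map_sum]⟩)
  rw [hfS, Finset.sum_Ico_eq_sub _ hNM] at this
  linarith

variable {E : Type*} [NormedAddCommGroup E] [NormedSpace ℝ E] [FiniteDimensional ℝ E]

theorem exists_finset_norm_sum_sub_le (v : ℕ → E)
    (hv : ∀ f : StrongDual ℝ E, f ≠ 0 → ¬ Summable fun n => max (f (v n)) 0) {M : ℕ} {δ : ℝ}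
    (hδ : ∀ n, M ≤ n → ‖v n‖ ≤ δ) (u : E) {ε : ℝ} (hε : 0 < ε) :
    ∃ G : Finset ℕ, (∀ n ∈ G, M ≤ n) ∧
      ‖∑ n ∈ G, v n - u‖ ≤ Module.finrank ℝ E * δ + ε := by
  obtain ⟨_, ⟨t, ht, rfl⟩, hut⟩ :=
    Metric.mem_closure_iff.1 (dense_linearCombination_image_tailCube v hv M u) ε hε
  have hsupp : ∀ n ∈ t.support, M ≤ n := fun n hn =>
    not_lt.1 fun h => Finsupp.mem_support_iff.1 hn ((ht n).2 h)
  obtain ⟨G, hG, hGt⟩ := exists_subset_norm_sum_sub_sum_smul_le_s4 t.support v t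
    (fun n _ => (ht n).1) ((norm_nonneg _).trans (hδ M le_rfl))
    fun n hn => hδ n (hsupp n hn)
  refine ⟨G, fun n hn => hsupp n (hG hn), ?_⟩
  rw [Finsupp.linearCombination_apply, dist_eq_norm'] at hut
  calc ‖∑ n ∈ G, v n - u‖ ≤ ‖∑ n ∈ G, v n - t.sum fun n r => r • v n‖ +
        ‖(t.sum fun n r => r • v n) - u‖ := norm_sub_le_norm_sub_add_norm_sub _ _ _
    _ ≤ Module.finrank ℝ E * δ + ε := add_le_add hGt hut.le

theorem exists_nodup_norm_sum_sub_le_forall_take (v : ℕ → E)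
    (hv : ∀ f : StrongDual ℝ E, f ≠ 0 → ¬ Summable fun n => max (f (v n)) 0)
    (hv₀ : Tendsto v atTop (𝓝 0)) (S : Finset ℕ) (u : E) {ε : ℝ} (hε : 0 < ε) :
    ∃ G : List ℕ, G.Nodup ∧ (∀ n ∈ G, n ∉ S) ∧ ‖(G.map v).sum - u‖ ≤ ε ∧
      ∀ k, ∃ θ ∈ Icc (0 : ℝ) 1, ‖((G.take k).map v).sum - θ • u‖ ≤ ε := by
  set D : ℝ := (Module.finrank ℝ E : ℝ)
  -- the approximation error `D δ + ε / 2` plus the Steinitz error `2 (D + 1) δ` is `ε`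
  set δ := ε / (2 * (3 * D + 2))
  have hδ : 0 < δ := by positivity
  have hD : 0 ≤ D := Nat.cast_nonneg _
  have hDδ : (3 * D + 2) * δ = ε / 2 := by
    simp only [δ]
    field_simp
  obtain ⟨M, hM⟩ := eventually_atTop.1 <|
    (hv₀.eventually (Metric.closedBall_mem_nhds 0 hδ)).and
      (Nat.cofinite_eq_atTop ▸ S.eventually_cofinite_notMem)
  obtain ⟨I, hIM, hIu⟩ := exists_finset_norm_sum_sub_le v hv
    (fun n hn => mem_closedBall_zero_iff.1 (hM n hn).1) u (half_pos hε)
  obtain ⟨G, hG, hGI, hGk⟩ := exists_nodup_norm_sum_take_sub_smul_sum_le I v hδ.le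
    fun n hn => mem_closedBall_zero_iff.1 (hM n (hIM n hn)).1
  refine ⟨G, hG, fun n hn => (hM n (hIM n (by simpa [← hGI] using hn))).2, ?_, fun k => ?_⟩
  · rw [← List.sum_toFinset v hG, hGI]
    nlinarith
  · obtain ⟨θ, hθ, hθk⟩ := hGk k
    refine ⟨θ, hθ, ?_⟩
    calc ‖((G.take k).map v).sum - θ • u‖
        = ‖(((G.take k).map v).sum - θ • ∑ n ∈ I, v n) + θ • (∑ n ∈ I, v n - u)‖ := by
          rw [smul_sub]; abel_nf
      _ ≤ 2 * (D + 1) * δ + 1 * (D * δ + ε / 2) := by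
          refine (norm_add_le _ _).trans (add_le_add hθk ?_)
          rw [norm_smul, Real.norm_of_nonneg hθ.1]
          exact mul_le_mul hθ.2 hIu (norm_nonneg _) zero_le_one
      _ = ε := by linarith

end Zonotope

section Series

theorem tendsto_atTop_nhds_zero_of_tendsto_sum_range {a : ℕ → ℝ} {l : ℝ}
    (h : Tendsto (fun N => ∑ n ∈ Finset.range N, a n) atTop (𝓝 l)) :
    Tendsto a atTop (𝓝 0) := by
  simpa [Finset.sum_range_succ_sub_sum] using ((tendsto_add_atTop_iff_nat 1).2 h).sub h

theorem not_summable_max_zero_of_tendsto_sum_range {y : ℕ → ℝ} {l : ℝ}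
    (hy : Tendsto (fun N => ∑ n ∈ Finset.range N, y n) atTop (𝓝 l))
    (habs : ¬ Summable fun n => |y n|) : ¬ Summable fun n => max (y n) 0 := by
  refine fun hpos => habs ⟨2 * ∑' n, max (y n) 0 - l,
    (hasSum_iff_tendsto_nat_of_nonneg (fun n => abs_nonneg _) _).2 ?_⟩
  -- `|y| = 2 max y 0 - y`
  refine ((hpos.hasSum.tendsto_sum_nat.const_mul 2).sub hy).congr fun N => ?_
  rw [Finset.mul_sum, ← Finset.sum_sub_distrib]
  refine Finset.sum_congr rfl fun n _ => ?_
  rcases le_total (y n) 0 with h | h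
  · rw [max_eq_right h, abs_of_nonpos h]; ring
  · rw [max_eq_left h, abs_of_nonneg h]; ring

theorem eq_zero_of_summable_abs_sum_fin {a : ℕ → ℕ → ℝ}
    (hind : ∀ c : ℕ → ℝ, (Function.support c).Finite →
      (Summable fun n => |∑ᶠ i, c i * a i n|) → c = 0)
    {d : ℕ} (c : Fin d → ℝ) (hc : Summable fun n => |∑ i, c i * a i n|) : c = 0 := by
  set c' : ℕ → ℝ := fun i => if h : i < d then c ⟨i, h⟩ else 0
  have hsupp : Function.support c' ⊆ Finset.range d := fun i hi => by
    by_contra h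
    exact hi (dif_neg (by simpa using h))
  have hsum : ∀ n, ∑ᶠ i, c' i * a i n = ∑ i, c i * a i n := fun n => by
    rw [finsum_eq_sum_of_support_subset _ ((Function.support_mul_subset_left _ _).trans hsupp),
      Finset.sum_range]
    simp [c']
  have := hind c' ((Finset.range d).finite_toSet.subset hsupp) (by simpa only [hsum] using hc)
  ext i
  simpa [c'] using congrFun this i

theorem not_summable_max_zero_apply {a : ℕ → ℕ → ℝ} (hcc : ∀ i, CondConv (a i))
    (hind : ∀ c : ℕ → ℝ, (Function.support c).Finite →
      (Summable fun n => |∑ᶠ i, c i * a i n|) → c = 0) {d : ℕ}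
    (f : StrongDual ℝ (Fin d → ℝ)) (hf : f ≠ 0) :
    ¬ Summable fun n => max (f fun i => a i n) 0 := by
  set c : Fin d → ℝ := fun i => f fun j => if i = j then 1 else 0
  have hf_apply : ∀ z, f z = ∑ i, c i * z i := fun z => by
    simpa [c, mul_comm] using f.toLinearMap.pi_apply_eq_sum_univ z
  choose l hl using fun i => (hcc i).1
  have hconv : Tendsto (fun N => ∑ n ∈ Finset.range N, f fun i => a i n) atTop
      (𝓝 (f fun i : Fin d => l i)) := by
    simp_rw [← map_sum]
    exact (f.continuous.tendsto _).comp (tendsto_pi_nhds.2 fun i => by simpa using hl i)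
  refine not_summable_max_zero_of_tendsto_sum_range hconv fun habs => hf ?_
  have hc := eq_zero_of_summable_abs_sum_fin hind c (by simpa [hf_apply] using habs)
  ext z
  simp [hf_apply, hc]

end Series

theorem exists_extension_abs_sum_sub_le {a : ℕ → ℕ → ℝ} (x : ℕ → ℝ) (t : ℕ)
    (hpos : ∀ f : StrongDual ℝ (Fin (t + 1) → ℝ), f ≠ 0 →
      ¬ Summable fun n => max (f fun i => a i n) 0)
    (hzero : ∀ i, Tendsto (a i) atTop (𝓝 0)) (L : List ℕ) (m : ℕ) {ε : ℝ} (hε : 0 < ε) :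
    ∃ G : List ℕ, G.Nodup ∧ (∀ n ∈ G, n ∉ m :: L) ∧ ∀ i ≤ t,
      |((L ++ m :: G).map (a i)).sum - x i| ≤ ε ∧
      ∀ k, |((L ++ (m :: G).take k).map (a i)).sum - x i| ≤
        |(L.map (a i)).sum - x i| + |a i m| + ε := by
  set v : ℕ → Fin (t + 1) → ℝ := fun n i => a i n
  set u : Fin (t + 1) → ℝ := fun i => x i - (L.map (a i)).sum - a i m
  obtain ⟨G, hG, hGS, hGu, hGk⟩ := exists_nodup_norm_sum_sub_le_forall_take v hpos
    (tendsto_pi_nhds.2 fun i => hzero i) (m :: L).toFinset u hε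
  have hcoord : ∀ (l : List ℕ) (θ : ℝ) (i : Fin (t + 1)),
      |(l.map (a i)).sum - θ * u i| ≤ ‖(l.map v).sum - θ • u‖ := fun l θ i => by
    simpa [Pi.list_sum_apply, v, Function.comp_def] using
      norm_le_pi_norm ((l.map v).sum - θ • u) i
  refine ⟨G, hG, fun n hn => by simpa using hGS n hn, fun i hi => ?_⟩
  set i' : Fin (t + 1) := ⟨i, Nat.lt_succ_of_le hi⟩
  have hu : u i' = x i - (L.map (a i)).sum - a i m := rfl
  have hu_le : |u i'| ≤ |(L.map (a i)).sum - x i| + |a i m| := by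
    rw [hu, abs_sub_comm (List.sum _)]
    exact abs_sub _ _
  refine ⟨?_, fun k => ?_⟩
  · have := (hcoord G 1 i').trans (by simpa using hGu)
    simp only [List.map_append, List.map_cons, List.sum_append, List.sum_cons]
    calc _ = |(G.map (a i)).sum - 1 * u i'| := by rw [hu]; ring_nf
      _ ≤ ε := this
  · rcases k with _ | k
    · simp only [List.take_zero, List.append_nil]
      linarith [abs_nonneg (a i m), abs_nonneg ε]
    obtain ⟨θ, hθ, hθk⟩ := hGk k
    have := (hcoord (G.take k) θ i').trans hθk
    simp only [List.take_succ_cons, List.map_append, List.map_cons, List.sum_append,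
      List.sum_cons]
    calc _ = |((G.take k).map (a i)).sum - θ * u i' - (1 - θ) * u i'| := by rw [hu]; ring_nf
      _ ≤ ε + (1 - θ) * |u i'| := by
          refine (abs_sub _ _).trans (add_le_add this ?_)
          rw [abs_mul, abs_of_nonneg (sub_nonneg.2 hθ.2)]
      _ ≤ |(L.map (a i)).sum - x i| + |a i m| + ε := by
          nlinarith [abs_nonneg (u i'), hθ.1]

section Rearrangement

theorem List.exists_equiv_getElem_eq_of_isPrefix {α : Type*} (L : ℕ → List α)
    (hpre : ∀ t, L t <+: L (t + 1)) (hnodup : ∀ t, (L t).Nodup)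
    (hlen : ∀ n, ∃ t, n < (L t).length) (hcover : ∀ a, ∃ t, a ∈ L t) :
    ∃ p : ℕ ≃ α, ∀ t n (h : n < (L t).length), p n = (L t)[n] := by
  have hmono : ∀ t t', t ≤ t' → L t <+: L t' := fun t t' h => by
    induction t', h using Nat.le_induction with
    | base => exact List.prefix_rfl
    | succ t' _ ih => exact ih.trans (hpre t')
  have hstable : ∀ t t' n (h : n < (L t).length) (h' : n < (L t').length),
      (L t)[n] = (L t')[n] := fun t t' n h h' => by
    rcases le_total t t' with htt | htt
    · exact (hmono t t' htt).getElem h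
    · exact ((hmono t' t htt).getElem h').symm
  set p : ℕ → α := fun n => (L (Nat.find (hlen n)))[n]'(Nat.find_spec (hlen n))
  have hp : ∀ t n (h : n < (L t).length), p n = (L t)[n] := fun t n h => hstable _ _ _ _ _
  refine ⟨Equiv.ofBijective p ⟨fun n n' hnn' => ?_, fun a => ?_⟩, hp⟩
  · obtain ⟨t, ht⟩ := hlen (max n n')
    rw [hp t n (by omega), hp t n' (by omega)] at hnn'
    exact (hnodup t).getElem_inj_iff.1 hnn'
  · obtain ⟨t, ht⟩ := hcover a
    obtain ⟨n, hn, rfl⟩ := List.mem_iff_getElem.1 ht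
    exact ⟨n, hp t n hn⟩

theorem sum_range_eq_sum_take {α M : Type*} [AddCommMonoid M] (f : α → M) {p : ℕ → α}
    {l : List α} (hp : ∀ n (h : n < l.length), p n = l[n]) {N : ℕ} (hN : N ≤ l.length) :
    ∑ n ∈ Finset.range N, f (p n) = ((l.take N).map f).sum := by
  induction N with
  | zero => simp
  | succ N ih =>
    rw [Finset.sum_range_succ, ih (by omega), List.take_add_one, List.map_append,
      List.sum_append, List.getElem?_eq_getElem (by omega), hp N (by omega)]
    simp

theorem tendsto_of_forall_mem_Icc_dist_le {X : Type*} [PseudoMetricSpace X] {s : ℕ → X}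
    {x : X} {g : ℕ → ℕ} (hg : StrictMono g) {b : ℕ → ℝ} (hb : Tendsto b atTop (𝓝 0))
    {T₀ : ℕ} (h : ∀ t ≥ T₀, ∀ N ∈ Icc (g t) (g (t + 1)), dist (s N) x ≤ b t) :
    Tendsto s atTop (𝓝 x) := by
  refine Metric.tendsto_atTop.2 fun ε hε => ?_
  obtain ⟨T, hT⟩ := eventually_atTop.1 ((hb.eventually (gt_mem_nhds hε)).and
    (eventually_ge_atTop T₀))
  refine ⟨g T, fun N hN => ?_⟩
  have hex : ∃ t, N < g t := ⟨N + 1, (Nat.lt_succ_self N).trans_le hg.le_apply⟩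
  have hTt : T < Nat.find hex := hg.lt_iff_lt.1 (hN.trans_lt (Nat.find_spec hex))
  have hlow : g (Nat.find hex - 1) ≤ N := not_lt.1 (Nat.find_min hex (by omega))
  have hhigh : N ≤ g (Nat.find hex - 1 + 1) := by
    rw [Nat.sub_add_cancel (by omega)]
    exact (Nat.find_spec hex).le
  exact (h _ (hT _ (by omega)).2 N ⟨hlow, hhigh⟩).trans_lt (hT _ (by omega)).1

end Rearrangement

section StageList

def mex (l : List ℕ) : ℕ :=
  Nat.find (by simpa using Infinite.exists_notMem_finset l.toFinset : ∃ n, n ∉ l)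

theorem mex_notMem (l : List ℕ) : mex l ∉ l := Nat.find_spec (p := (· ∉ l)) _

theorem mex_le_of_notMem {l : List ℕ} {n : ℕ} (h : n ∉ l) : mex l ≤ n :=
  Nat.find_min' (p := (· ∉ l)) _ h

def stageList (G : ℕ → List ℕ → List ℕ) : ℕ → List ℕ
  | 0 => []
  | t + 1 => stageList G t ++ mex (stageList G t) :: G t (stageList G t)

variable (G : ℕ → List ℕ → List ℕ)

theorem stageList_isPrefix_succ (t : ℕ) : stageList G t <+: stageList G (t + 1) :=
  List.prefix_append _ _

theorem mem_stageList_of_lt {n t : ℕ} (h : n < t) : n ∈ stageList G t := by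
  induction t generalizing n with
  | zero => omega
  | succ t ih =>
    rcases (Nat.lt_succ_iff.1 h).lt_or_eq with h | rfl
    · exact (stageList_isPrefix_succ G t).subset (ih h)
    by_cases hn : n ∈ stageList G n
    · exact (stageList_isPrefix_succ G n).subset hn
    have : mex (stageList G n) = n := le_antisymm (mex_le_of_notMem hn)
      (not_lt.1 fun h' => mex_notMem _ (ih h'))
    simp [stageList, this]

theorem le_mex_stageList (t : ℕ) : t ≤ mex (stageList G t) :=
  not_lt.1 fun h => mex_notMem _ (mem_stageList_of_lt G h)

theorem strictMono_length_stageList : StrictMono fun t => (stageList G t).length :=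
  strictMono_nat_of_lt_succ fun t => by simp [stageList]

variable {G}

theorem nodup_stageList (hG : ∀ t l, (G t l).Nodup) (hGl : ∀ t l, ∀ n ∈ G t l, n ∉ mex l :: l)
    (t : ℕ) : (stageList G t).Nodup := by
  induction t with
  | zero => exact List.nodup_nil
  | succ t ih =>
    refine List.nodup_append.2 ⟨ih, List.nodup_cons.2 ⟨fun h => ?_, hG _ _⟩, ?_⟩
    · exact hGl _ _ _ h List.mem_cons_self
    · rintro n hn _ (_ | ⟨_, hn'⟩) rfl
      · exact mex_notMem _ hn
      · exact hGl _ _ _ hn' (List.mem_cons_of_mem _ hn)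

end StageList

theorem exists_perm_tendsto_of_forall_extension {a : ℕ → ℕ → ℝ} (x : ℕ → ℝ)
    (hzero : ∀ i, Tendsto (a i) atTop (𝓝 0)) {ε : ℕ → ℝ} (hε : Tendsto ε atTop (𝓝 0))
    (hext : ∀ (t : ℕ) (L : List ℕ) (m : ℕ), ∃ G : List ℕ, G.Nodup ∧ (∀ n ∈ G, n ∉ m :: L) ∧
      ∀ i ≤ t, |((L ++ m :: G).map (a i)).sum - x i| ≤ ε t ∧
      ∀ k, |((L ++ (m :: G).take k).map (a i)).sum - x i| ≤
        |(L.map (a i)).sum - x i| + |a i m| + ε t) :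
    ∃ p : Equiv.Perm ℕ, ∀ i,
      Tendsto (fun N => ∑ n ∈ Finset.range N, a i (p n)) atTop (𝓝 (x i)) := by
  choose G hGnd hGdisj hG using fun t L => hext t L (mex L)
  set L := stageList G
  obtain ⟨p, hp⟩ := List.exists_equiv_getElem_eq_of_isPrefix L (stageList_isPrefix_succ G)
    (nodup_stageList hGnd hGdisj)
    (fun n => ⟨n + 1, (Nat.lt_succ_self n).trans_le (strictMono_length_stageList G).le_apply⟩)
    fun n => ⟨n + 1, mem_stageList_of_lt G (Nat.lt_succ_self n)⟩
  -- during stage `t` the error is the one left by stage `t - 1`, plus a term, plus `ε t`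
  refine ⟨p, fun i => tendsto_of_forall_mem_Icc_dist_le (strictMono_length_stageList G)
    (b := fun t => ε (t - 1) + |a i (mex (L t))| + ε t) ?_ (T₀ := i + 1) fun t ht N hN => ?_⟩
  · have hmex : Tendsto (fun t => mex (L t)) atTop atTop :=
      tendsto_atTop_mono (le_mex_stageList G) tendsto_id
    simpa using ((hε.comp (tendsto_sub_atTop_nat 1)).add ((hzero i).comp hmex).abs).add hε
  obtain ⟨s, rfl⟩ : ∃ s, t = s + 1 := ⟨t - 1, by omega⟩
  have hsplit : (L (s + 1 + 1)).take N =
      L (s + 1) ++ (mex (L (s + 1)) :: G (s + 1) (L (s + 1))).take (N - (L (s + 1)).length) := by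
    rw [show L (s + 1 + 1) = _ ++ _ from rfl, List.take_append, List.take_of_length_le hN.1]
  rw [Real.dist_eq, sum_range_eq_sum_take _ (hp (s + 1 + 1)) hN.2, hsplit]
  have hprev : |((L (s + 1)).map (a i)).sum - x i| ≤ ε s := (hG s (L s) i (by omega)).1
  have hcur := (hG (s + 1) (L (s + 1)) i (by omega)).2 (N - (L (s + 1)).length)
  simp only [Nat.add_sub_cancel]
  exact hcur.trans (by linarith)

/-- Lévy–Steinitz for countable independent families: if `⟨aⁱ : i < ω⟩` is an
independent sequence of conditionally convergent real series, then for any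
prescribed sequence of reals `⟨xᵢ⟩` there is a single permutation of `ℕ`
rearranging every `aⁱ` to converge to `xᵢ`. -/
theorem countable_independent_levy_steinitz (a : ℕ → ℕ → ℝ)
    (hcc : ∀ i, CondConv (a i))
    (hind : ∀ c : ℕ → ℝ, (Function.support c).Finite →
      (Summable fun n => |∑ᶠ i, c i * a i n|) → c = 0)
    (x : ℕ → ℝ) :
    ∃ p : Equiv.Perm ℕ, ∀ i,
      Tendsto (fun N => ∑ n ∈ Finset.range N, a i (p n)) atTop (nhds (x i)) := by
  have hzero : ∀ i, Tendsto (a i) atTop (𝓝 0) := fun i =>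
    tendsto_atTop_nhds_zero_of_tendsto_sum_range (hcc i).1.choose_spec
  exact exists_perm_tendsto_of_forall_extension x hzero tendsto_one_div_add_atTop_nhds_zero_nat
    fun t L m => exists_extension_abs_sum_sub_le x t (not_summable_max_zero_apply hcc hind)
      hzero L m Nat.one_div_pos_of_nat
end

section
/- Let ā = ⟨aⁱ : i < ω⟩ be a sequence of conditionally convergent real series and let p be a permutation of ℕ such that Σ_{n∈ℕ} aⁱ_{p(n)} converges for every i ∈ ℕ. For each i let xᵢ = Σ_n aⁱ_{p(n)} − Σ_n aⁱ_n. Then the vector ⟨xᵢ : i < ω⟩ lies in R(ā), i.e., for every finitely supported ⟨dᵢ : i < ω⟩ ∈ ℝ^ω such that Σ_n (Σ_i dᵢ aⁱ_n) is absolutely convergent, one has Σ_i dᵢ xᵢ = 0. -/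
open Filter

/-- If every coordinate series of `⟨aⁱ : i < ω⟩` converges after rearranging by a
permutation `p`, then the vector of differences `xᵢ = Σ aⁱ_{p(n)} − Σ aⁱ_n`
lies in `R(ā)`, the orthogonal complement of `K(ā)`. -/
theorem rearranged_difference_mem_R (a : ℕ → ℕ → ℝ)
    (hcc : ∀ i, CondConv (a i))
    (s : ℕ → ℝ)
    (hs : ∀ i, Tendsto (fun N => ∑ n ∈ Finset.range N, a i n) atTop (nhds (s i)))
    (p : Equiv.Perm ℕ) (t : ℕ → ℝ)
    (ht : ∀ i, Tendsto (fun N => ∑ n ∈ Finset.range N, a i (p n)) atTop (nhds (t i))) :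
    ∀ c : ℕ → ℝ, (Function.support c).Finite →
      (Summable fun n => |∑ᶠ i, c i * a i n|) → ∑ᶠ i, c i * (t i - s i) = 0 := by
  intro c hfin hsum
  set F := hfin.toFinset with hF
  set b : ℕ → ℝ := fun n => ∑ i ∈ F, c i * a i n with hb
  have hbeq : ∀ n, (∑ᶠ i, c i * a i n) = b n := by
    intro n
    refine finsum_eq_finset_sum_of_support_subset _ ?_
    intro i hi
    simp only [Function.mem_support] at hi
    have : c i ≠ 0 := fun h => hi (by simp [h])
    simpa [hF] using this
  have hbsum : Summable b := by
    have : Summable fun n => |b n| := by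
      simpa only [hbeq] using hsum
    exact summable_abs_iff.mp this
  -- partial sums of b tend to S := ∑ i in F, c i * s i
  have hS : Tendsto (fun N => ∑ n ∈ Finset.range N, b n) atTop
      (nhds (∑ i ∈ F, c i * s i)) := by
    have : ∀ N, ∑ n ∈ Finset.range N, b n
        = ∑ i ∈ F, c i * ∑ n ∈ Finset.range N, a i n := by
      intro N
      rw [Finset.sum_comm]
      simp [Finset.mul_sum]
    simp only [this]
    exact tendsto_finset_sum _ fun i _ => ((hs i).const_mul (c i))
  have hT : Tendsto (fun N => ∑ n ∈ Finset.range N, b (p n)) atTop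
      (nhds (∑ i ∈ F, c i * t i)) := by
    have : ∀ N, ∑ n ∈ Finset.range N, b (p n)
        = ∑ i ∈ F, c i * ∑ n ∈ Finset.range N, a i (p n) := by
      intro N
      rw [Finset.sum_comm]
      simp [Finset.mul_sum]
    simp only [this]
    exact tendsto_finset_sum _ fun i _ => ((ht i).const_mul (c i))
  have hSb : ∑' n, b n = ∑ i ∈ F, c i * s i :=
    tendsto_nhds_unique hbsum.hasSum.tendsto_sum_nat hS
  have hbpsum : Summable fun n => b (p n) := hbsum.comp_injective p.injective
  have hTb : ∑' n, b (p n) = ∑ i ∈ F, c i * t i :=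
    tendsto_nhds_unique hbpsum.hasSum.tendsto_sum_nat hT
  have hperm : ∑' n, b (p n) = ∑' n, b n := p.tsum_eq b
  have key : ∑ i ∈ F, c i * t i = ∑ i ∈ F, c i * s i := by
    rw [← hTb, hperm, hSb]
  have : (∑ᶠ i, c i * (t i - s i)) = ∑ i ∈ F, c i * (t i - s i) := by
    refine finsum_eq_finset_sum_of_support_subset _ ?_
    intro i hi
    simp only [Function.mem_support] at hi
    have : c i ≠ 0 := fun h => hi (by simp [h])
    simpa [hF] using this
  rw [this]
  simp only [mul_sub, Finset.sum_sub_distrib]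
  rw [key, sub_self]
end

section
/- Let ⟨aⁱ : i < d⟩ be a finite sequence of conditionally convergent real series. Then there exists a set s ⊆ {0, …, d−1} such that { aⁱ : i ∈ s } is independent, and for each j ∈ {0, …, d−1}∖s there exist scalars kᵢ (i ∈ s), not all 0, such that the series Σ_n (Σ_{i∈s} kᵢ aⁱ_n + aʲ_n) is absolutely convergent. -/
open Filter

/-- Any finite sequence of conditionally convergent real series contains an
independent subfamily `{aⁱ : i ∈ s}` such that each remaining series `aʲ` is,
up to a nontrivial linear combination of the `aⁱ` (i ∈ s), absolutely
convergent. -/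
theorem exists_independent_basis_finite (d : ℕ) (a : Fin d → ℕ → ℝ)
    (hcc : ∀ i, CondConv (a i)) :
    ∃ s : Finset (Fin d),
      (∀ c : Fin d → ℝ, (∀ i ∉ s, c i = 0) →
        (Summable fun n => |∑ i ∈ s, c i * a i n|) → ∀ i, c i = 0) ∧
      ∀ j ∉ s, ∃ k : Fin d → ℝ, (∃ i ∈ s, k i ≠ 0) ∧
        Summable fun n => |(∑ i ∈ s, k i * a i n) + a j n| := by
  classical
  set P : Finset (Fin d) → Prop := fun s =>
    ∀ c : Fin d → ℝ, (∀ i ∉ s, c i = 0) →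
      (Summable fun n => |∑ i ∈ s, c i * a i n|) → ∀ i, c i = 0 with hP
  have hPempty : P ∅ := fun c hc _ i => hc i (Finset.notMem_empty i)
  obtain ⟨s, hsP, hmax⟩ : ∃ s, P s ∧ ∀ t, P t → t.card ≤ s.card := by
    have hne : (Finset.univ.filter P).Nonempty := ⟨∅, Finset.mem_filter.mpr ⟨Finset.mem_univ _, hPempty⟩⟩
    obtain ⟨s, hs, hmax⟩ := Finset.exists_max_image _ Finset.card hne
    exact ⟨s, (Finset.mem_filter.mp hs).2, fun t ht =>
      hmax t (Finset.mem_filter.mpr ⟨Finset.mem_univ t, ht⟩)⟩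
  refine ⟨s, hsP, fun j hj => ?_⟩
  have hins : ¬ P (insert j s) := by
    intro h
    have := hmax _ h
    rw [Finset.card_insert_of_notMem hj] at this
    omega
  simp only [hP] at hins
  push_neg at hins
  obtain ⟨c, hc0, hcs, i0, hi0⟩ := hins
  have hcj : c j ≠ 0 := by
    intro h0
    apply hi0
    apply hsP c
    · intro i hi
      by_cases hij : i = j
      · rw [hij]; exact h0
      · exact hc0 i (by simp [Finset.mem_insert, hij, hi])
    · refine hcs.congr fun n => ?_
      congr 1
      rw [Finset.sum_insert hj, h0, zero_mul, zero_add]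
  refine ⟨fun i => if i ∈ s then c i / c j else 0, ?_, ?_⟩
  · by_contra hk
    push_neg at hk
    have hcs0 : ∀ i ∈ s, c i = 0 := fun i hi => by
      have h := hk i hi
      rw [if_pos hi, div_eq_zero_iff] at h
      tauto
    have hsum : Summable fun n => |a j n| := by
      have h1 : Summable fun n => |c j| * |a j n| := by
        refine hcs.congr fun n => ?_
        rw [Finset.sum_insert hj,
          Finset.sum_eq_zero fun i hi => by rw [hcs0 i hi, zero_mul],
          add_zero, abs_mul]
      have h2 := h1.mul_left |c j|⁻¹
      refine h2.congr fun n => ?_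
      rw [inv_mul_cancel_left₀ (abs_ne_zero.mpr hcj)]
    exact (hcc j).2 hsum
  · have h1 := hcs.mul_left |(c j)⁻¹|
    refine h1.congr fun n => ?_
    rw [← abs_mul]
    congr 1
    rw [Finset.sum_insert hj, mul_add, inv_mul_cancel_left₀ hcj, Finset.mul_sum, add_comm]
    congr 1
    refine Finset.sum_congr rfl fun i hi => ?_
    simp only [if_pos hi]
    field_simp
end

section
/- Let ⟨aⁱ : i < ω⟩ be a sequence of conditionally convergent real series. Then there exists a set I ⊆ ℕ such that { aⁱ : i ∈ I } is independent, and for each j ∈ ℕ∖I there exist a real number c_j and reals d^j_k (k ∈ I ∩ {0, …, j−1}) such that the series Σ_n (Σ_{k∈I∩j} d^j_k aᵏ_n + aʲ_n) is absolutely convergent with sum c_j. -/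
open Filter
open scoped Classical

/-- Greedily built finite set `I ∩ [0, j)`. -/
noncomputable def FsetAux (a : ℕ → ℕ → ℝ) : ℕ → Finset ℕ
  | 0 => ∅
  | j + 1 =>
      if ∃ d : ℕ → ℝ, Summable fun n => |(∑ k ∈ FsetAux a j, d k * a k n) + a j n| then
        FsetAux a j
      else
        insert j (FsetAux a j)

/-- The independent index set. -/
def ISetAux (a : ℕ → ℕ → ℝ) : Set ℕ :=
  {j | ¬ ∃ d : ℕ → ℝ, Summable fun n => |(∑ k ∈ FsetAux a j, d k * a k n) + a j n|}

lemma mem_FsetAux (a : ℕ → ℕ → ℝ) :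
    ∀ j k, k ∈ FsetAux a j ↔ k < j ∧ k ∈ ISetAux a := by
  intro j
  induction j with
  | zero => intro k; simp [FsetAux]
  | succ j ih =>
    intro k
    by_cases h : ∃ d : ℕ → ℝ, Summable fun n => |(∑ k ∈ FsetAux a j, d k * a k n) + a j n|
    · simp only [FsetAux, if_pos h, ih]
      constructor
      · rintro ⟨hk, hkI⟩; exact ⟨Nat.lt_succ_of_lt hk, hkI⟩
      · rintro ⟨hk, hkI⟩
        refine ⟨?_, hkI⟩
        rcases Nat.lt_succ_iff_lt_or_eq.mp hk with h' | rfl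
        · exact h'
        · exact absurd h hkI
    · simp only [FsetAux, if_neg h, Finset.mem_insert, ih]
      constructor
      · rintro (rfl | ⟨hk, hkI⟩)
        · exact ⟨Nat.lt_succ_self _, h⟩
        · exact ⟨Nat.lt_succ_of_lt hk, hkI⟩
      · rintro ⟨hk, hkI⟩
        rcases Nat.lt_succ_iff_lt_or_eq.mp hk with h' | rfl
        · exact Or.inr ⟨h', hkI⟩
        · exact Or.inl rfl

lemma filter_eq_FsetAux (a : ℕ → ℕ → ℝ) (j : ℕ) :
    (Finset.range j).filter (· ∈ ISetAux a) = FsetAux a j := by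
  ext k
  simp [mem_FsetAux, Finset.mem_filter, and_comm]

/-- Any countable sequence of conditionally convergent real series contains an
independent subfamily `{aⁱ : i ∈ I}` such that for each `j ∉ I` there are reals
`c_j` and `d^j_k` (k ∈ I ∩ j) with `Σ_n (Σ_{k∈I∩j} d^j_k aᵏ_n + aʲ_n)`
absolutely convergent with sum `c_j`. -/
theorem exists_independent_basis_countable (a : ℕ → ℕ → ℝ)
    (hcc : ∀ i, CondConv (a i)) :
    ∃ I : Set ℕ,
      (∀ c : ℕ → ℝ, (Function.support c).Finite → Function.support c ⊆ I →
        (Summable fun n => |∑ᶠ i, c i * a i n|) → c = 0) ∧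
      ∀ j ∉ I, ∃ cj : ℝ, ∃ dj : ℕ → ℝ,
        HasSum (fun n => (∑ k ∈ (Finset.range j).filter (· ∈ I), dj k * a k n) + a j n) cj ∧
        Summable fun n => |(∑ k ∈ (Finset.range j).filter (· ∈ I), dj k * a k n) + a j n| := by
  refine ⟨ISetAux a, ?_, ?_⟩
  · -- independence
    intro c hc hcI hsum
    by_contra hne
    -- support nonempty
    have hne' : hc.toFinset.Nonempty := by
      rw [Finset.nonempty_iff_ne_empty]
      intro h
      apply hne
      funext i
      by_contra hi
      have : i ∈ hc.toFinset := by simpa using hi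
      simp [h] at this
    set m := hc.toFinset.max' hne' with hm
    have hmmem : m ∈ Function.support c := by
      have := hc.toFinset.max'_mem hne'
      simpa using this
    have hcm : c m ≠ 0 := hmmem
    have hmI : m ∈ ISetAux a := hcI hmmem
    -- every other support element lies in FsetAux a m
    have hsub : hc.toFinset ⊆ insert m (FsetAux a m) := by
      intro k hk
      rcases eq_or_ne k m with rfl | hkm
      · exact Finset.mem_insert_self _ _
      · refine Finset.mem_insert_of_mem ?_
        rw [mem_FsetAux]
        have hk' : k ∈ Function.support c := by simpa using hk
        exact ⟨lt_of_le_of_ne (hc.toFinset.le_max' k hk) hkm, hcI hk'⟩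
    have hmnot : m ∉ FsetAux a m := by
      rw [mem_FsetAux]; simp
    -- rewrite the finsum
    have key : ∀ n, (∑ k ∈ FsetAux a m, (c k / c m) * a k n) + a m n
        = (c m)⁻¹ * ∑ᶠ i, c i * a i n := by
      intro n
      have h1 : ∑ᶠ i, c i * a i n = ∑ i ∈ hc.toFinset, c i * a i n := by
        apply finsum_eq_finset_sum_of_support_subset
        intro x hx
        have : c x ≠ 0 := by
          intro h; apply hx; simp [Function.mem_support] at *; simp [h]
        simpa using this
      have h2 : ∑ i ∈ hc.toFinset, c i * a i n
          = ∑ i ∈ insert m (FsetAux a m), c i * a i n := by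
        apply Finset.sum_subset hsub
        intro x _ hx
        have : c x = 0 := by
          by_contra h
          exact hx (by simpa using h)
        simp [this]
      rw [h1, h2, Finset.sum_insert hmnot, mul_add, ← mul_assoc, inv_mul_cancel₀ hcm,
        one_mul, Finset.mul_sum, add_comm]
      congr 1
      apply Finset.sum_congr rfl
      intro k _
      rw [div_eq_inv_mul]; ring
    -- contradiction with m ∈ I
    apply hmI
    refine ⟨fun k => c k / c m, ?_⟩
    have : (fun n => |(∑ k ∈ FsetAux a m, (c k / c m) * a k n) + a m n|)
        = fun n => |(c m)⁻¹| * |∑ᶠ i, c i * a i n| := by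
      funext n
      rw [key n, abs_mul]
    rw [this]
    exact hsum.mul_left _
  · -- dependence of j ∉ I
    intro j hj
    rw [ISetAux, Set.mem_setOf_eq, not_not] at hj
    obtain ⟨d, hd⟩ := hj
    rw [filter_eq_FsetAux]
    have hsummable : Summable fun n => (∑ k ∈ FsetAux a j, d k * a k n) + a j n := by
      rw [← summable_abs_iff]; exact hd
    exact ⟨_, d, hsummable.hasSum, hd⟩
end

section
/- Let ⟨aⁱ : i < ω⟩ be an independent sequence of conditionally convergent real series, let ⟨xᵢ : i < ω⟩ be a sequence of real numbers, and let ⟨C_d : d ≥ 1⟩ be a nondecreasing sequence of positive constants such that each C_d satisfies the Polygonal Confinement property in dimension d. Define the poset P and its order as follows. A condition of P is a triple (f, d, ε) where: f is an injection from some n ∈ ℕ to ℕ; d is a positive integer; ε is a positive rational; ‖Σ_{k<n} ⟨aⁱ_{f(k)} : i < d⟩ − ⟨xᵢ : i < d⟩‖ < ε; and for all m ∈ ℕ∖range(f), ‖⟨aⁱ_m : i < d⟩‖ < ε/C_d. Set (g, e, δ) ≤ (f, d, ε) iff: g extends f; e ≥ d; for all m ≤ dom(g), ‖Σ_{k∈m∖dom(f)}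 ⟨aⁱ_{g(k)} : i < d⟩‖ < 2ε; and 2δ + ‖Σ_{k∈dom(g)∖dom(f)} ⟨aⁱ_{g(k)} : i < d⟩‖ ≤ 2ε. Then: for each condition (f, d, ε) ∈ P and each positive n ∈ ℕ, there exists a condition (g, d+1, δ) ≤ (f, d, ε) such that {0, …, n−1} ⊆ dom(g) ∩ range(g) and δ < 1/n. -/
/-!
For a nonzero functional `φ` on `ℝᵉ`, independence makes `∑ φ(aₘ)` conditionally convergent
(`aₘ = ⟨aⁱ_m : i < e⟩`), so the positive parts of `φ(aₘ)` have divergent sum on every tail. By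
Hahn–Banach the combinations `∑ λₘ aₘ` with `λₘ ∈ [0,1]` supported on a tail are then dense in
`ℝᵉ`. Such a combination can be rounded to a subset sum: at an extreme point of the set of
weights with the same sum at most `e` weights are fractional, and `aₘ → 0`. So the subset sums
of every tail are dense.

The new values of `g` are the indices below `n`, the finitely many indices with a large
`(d+1)`-vector, and a subset of a far tail chosen so that the `(d+1)`-error drops below `δ/2`;
projecting, the `d`-error is also below `δ/2`. Polygonal confinement in dimension `d`, applied
after padding the new vectors with `R` copies of `-(their sum)/R`, orders them so that all
partial sums stay within `ε` plus the norm of their total.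
-/

open Filter

/-- `C` satisfies the Polygonal Confinement property in dimension `d`. -/
def PolyConf (d : ℕ) (C : ℝ) : Prop :=
  ∀ n : ℕ, 0 < n → ∀ w : ℕ → EuclideanSpace ℝ (Fin d),
    (∑ k ∈ Finset.range n, w k) = 0 → (∀ k < n, ‖w k‖ ≤ 1) →
    ∃ q : ℕ → ℕ, Set.BijOn q (Set.Ico 1 n) (Set.Ico 1 n) ∧
      ∀ j ≤ n, ‖w 0 + ∑ k ∈ Finset.Ico 1 j, w (q k)‖ ≤ C

/-- The vector `⟨aⁱ_m : i < d⟩ ∈ ℝ^d` (with the Euclidean norm). -/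
def avec (a : ℕ → ℕ → ℝ) (d m : ℕ) : EuclideanSpace ℝ (Fin d) :=
  WithLp.toLp 2 (fun i => a i m)

/-- `⟨xᵢ : i < d⟩` as a vector of `ℝ^d`. -/
def xvec (x : ℕ → ℝ) (d : ℕ) : EuclideanSpace ℝ (Fin d) :=
  WithLp.toLp 2 (fun i => x i)

/-- `(f, nf, d, ε)` is a condition of the poset `P`, where the finite injection `f`
is represented by a function `f : ℕ → ℕ` together with its domain `nf` (only the
values `f k` for `k < nf` matter). -/
def PCond (a : ℕ → ℕ → ℝ) (x : ℕ → ℝ) (C : ℕ → ℝ)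
    (f : ℕ → ℕ) (nf d : ℕ) (ε : ℚ) : Prop :=
  Set.InjOn f (Set.Iio nf) ∧ 0 < d ∧ 0 < ε ∧
  ‖(∑ k ∈ Finset.range nf, avec a d (f k)) - xvec x d‖ < (ε : ℝ) ∧
  ∀ m : ℕ, m ∉ f '' (Set.Iio nf) → ‖avec a d m‖ < (ε : ℝ) / C d

/-- The order of the poset `P`: `(g, ng, e, δ) ≤ (f, nf, d, ε)`. -/
def PLe (a : ℕ → ℕ → ℝ)
    (g : ℕ → ℕ) (ng e : ℕ) (δ : ℚ)
    (f : ℕ → ℕ) (nf d : ℕ) (ε : ℚ) : Prop :=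
  nf ≤ ng ∧ (∀ k < nf, g k = f k) ∧ d ≤ e ∧
  (∀ m ≤ ng, ‖∑ k ∈ Finset.Ico nf m, avec a d (g k)‖ < 2 * (ε : ℝ)) ∧
  2 * (δ : ℝ) + ‖∑ k ∈ Finset.Ico nf ng, avec a d (g k)‖ ≤ 2 * (ε : ℝ)

open Filter Topology Finset

lemma tendsto_sum_Ico_posPart_atTop {b : ℕ → ℝ} {l : ℝ}
    (hb : Tendsto (fun M => ∑ m ∈ range M, b m) atTop (𝓝 l))
    (habs : ¬ Summable fun m => |b m|) (N : ℕ) :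
    Tendsto (fun M => ∑ m ∈ Ico N M, (b m)⁺) atTop atTop := by
  rw [not_summable_iff_tendsto_nat_atTop_of_nonneg fun m => abs_nonneg (b m)] at habs
  have key := ((habs.atTop_add hb).atTop_add tendsto_const_nhds
    (C := -(∑ m ∈ range N, |b m| + ∑ m ∈ range N, b m))).atTop_div_const two_pos
  refine key.congr' ((eventually_ge_atTop N).mono fun M hM => ?_)
  have h₁ := sum_range_add_sum_Ico (fun m => |b m|) hM
  have h₂ := sum_range_add_sum_Ico b hM
  have h₃ : ∑ m ∈ Ico N M, (b m)⁺ = (∑ m ∈ Ico N M, |b m| + ∑ m ∈ Ico N M, b m) / 2 := by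
    rw [← sum_add_distrib, sum_div]
    exact sum_congr rfl fun m _ => by
      linarith [posPart_add_negPart (b m), posPart_sub_negPart (b m)]
  simp only at h₁ ⊢
  linarith

lemma tendsto_avec_atTop_zero {a : ℕ → ℕ → ℝ} (hcc : ∀ i, CondConv (a i)) (e : ℕ) :
    Tendsto (avec a e) atTop (𝓝 0) := by
  have h : Tendsto (fun m (i : Fin e) => a i m) atTop (𝓝 (0 : Fin e → ℝ)) := by
    refine tendsto_pi_nhds.2 fun i => ?_
    obtain ⟨l, hl⟩ := (hcc i).1
    simpa [sum_range_succ] using (hl.comp (tendsto_add_atTop_nat 1)).sub hl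
  have h' := ((PiLp.continuous_toLp 2 _).tendsto _).comp h
  rw [WithLp.toLp_zero] at h'
  exact h'

lemma exists_tendsto_sum_range_avec {a : ℕ → ℕ → ℝ} (hcc : ∀ i, CondConv (a i)) (e : ℕ) :
    ∃ s, Tendsto (fun M => ∑ m ∈ range M, avec a e m) atTop (𝓝 s) := by
  choose l hl using fun i : Fin e => (hcc i).1
  refine ⟨WithLp.toLp 2 l, ?_⟩
  have h : Tendsto (fun M (i : Fin e) => ∑ m ∈ range M, a i m) atTop (𝓝 l) :=
    tendsto_pi_nhds.2 hl
  convert ((PiLp.continuous_toLp 2 _).tendsto _).comp h using 2 with M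
  ext i
  simp [avec]

lemma EuclideanSpace.apply_eq_sum_mul_single {ι : Type*} [Fintype ι] [DecidableEq ι]
    (φ : EuclideanSpace ℝ ι →L[ℝ] ℝ) (z : EuclideanSpace ℝ ι) :
    φ z = ∑ j, z j * φ (EuclideanSpace.single j 1) := by
  conv_lhs => rw [← (EuclideanSpace.basisFun ι ℝ).sum_repr z]
  simp

lemma not_summable_abs_apply_avec {a : ℕ → ℕ → ℝ}
    (hind : ∀ c : ℕ → ℝ, (Function.support c).Finite →
      (Summable fun n => |∑ᶠ i, c i * a i n|) → c = 0)
    {e : ℕ} {φ : EuclideanSpace ℝ (Fin e) →L[ℝ] ℝ} (hφ : φ ≠ 0) :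
    ¬ Summable fun m => |φ (avec a e m)| := by
  intro hs
  set c : ℕ → ℝ := fun i => if h : i < e then φ (EuclideanSpace.single ⟨i, h⟩ 1) else 0
  have hc_supp : Function.support c ⊆ range e := fun i hi => by
    by_contra h
    simp_all [c]
  have hc : ∀ m, ∑ᶠ i, c i * a i m = φ (avec a e m) := fun m => by
    rw [finsum_eq_sum_of_support_subset _ ((Function.support_mul_subset_left _ _).trans hc_supp),
      ← Fin.sum_univ_eq_sum_range, EuclideanSpace.apply_eq_sum_mul_single]
    simp [c, avec, mul_comm]
  have hc0 := hind c ((range e).finite_toSet.subset hc_supp) (by simpa only [hc] using hs)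
  refine hφ (ContinuousLinearMap.ext fun z => ?_)
  rw [EuclideanSpace.apply_eq_sum_mul_single]
  have hsingle (j : Fin e) : φ (EuclideanSpace.single j 1) = 0 := by
    simpa [c] using congr_fun hc0 j
  simp [hsingle]

section Rounding

variable {E : Type*} [NormedAddCommGroup E] [NormedSpace ℝ E] [FiniteDimensional ℝ E]
  {ι : Type*} [Fintype ι]

/-- A linear relation among the vectors with fractional weight could be added to and subtracted
from `s`, contradicting extremality. -/
lemma card_fractional_le_finrank_of_mem_extremePoints (v : ι → E) {z : E} {s : ι → ℝ}
    (hs : s ∈ Set.extremePoints ℝ {s | s ∈ Set.Icc 0 1 ∧ ∑ i, s i • v i = z}) :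
    #{i | s i ∈ Set.Ioo 0 1} ≤ Module.finrank ℝ E := by
  classical
  set F : Finset ι := {i | s i ∈ Set.Ioo 0 1}
  by_contra hcard
  obtain ⟨μ, hμ, i₀, hi₀, hμi₀⟩ : ∃ μ : ι → ℝ, ∑ i ∈ F, μ i • v i = 0 ∧ ∃ i ∈ F, μ i ≠ 0 := by
    have : ¬ LinearIndepOn ℝ v (F : Set ι) := fun h => hcard <| by
      simpa using h.fintype_card_le_finrank
    simpa [linearIndepOn_finset_iff] using this
  set μ' : ι → ℝ := fun i => if i ∈ F then μ i else 0
  have hsmall : ∀ᶠ σ in 𝓝 (0 : ℝ), ∀ i, s i + σ * μ' i ∈ Set.Icc 0 1 := by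
    refine Filter.eventually_all.2 fun i => ?_
    by_cases hi : i ∈ F
    · have hIoo : s i ∈ Set.Ioo 0 1 := by simpa [F] using hi
      have hlim : Tendsto (fun σ : ℝ => s i + σ * μ' i) (𝓝 0) (𝓝 (s i)) :=
        (continuous_const.add (continuous_id.mul continuous_const)).tendsto' 0 (s i) (by simp)
      exact (hlim.eventually (isOpen_Ioo.mem_nhds hIoo)).mono fun _ h => Set.Ioo_subset_Icc_self h
    · have : s i ∈ Set.Icc 0 1 := ⟨hs.1.1.1 i, hs.1.1.2 i⟩
      simp [μ', hi, this]
  have hboth := hsmall.and ((continuous_neg.tendsto' 0 0 neg_zero).eventually hsmall)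
  obtain ⟨τ, ⟨hτ₁, hτ₂⟩, hτ0⟩ := ((hboth.filter_mono nhdsWithin_le_nhds).and
    (self_mem_nhdsWithin (s := {0}ᶜ))).exists
  have hrel : ∑ i, μ' i • v i = 0 := by simpa [μ', ite_smul] using hμ
  have hmem : ∀ σ : ℝ, (∀ i, s i + σ * μ' i ∈ Set.Icc 0 1) →
      s + σ • μ' ∈ {s | s ∈ Set.Icc 0 1 ∧ ∑ i, s i • v i = z} := fun σ hσ =>
    ⟨⟨fun i => (hσ i).1, fun i => (hσ i).2⟩, by
      simp [add_smul, sum_add_distrib, mul_smul, ← smul_sum, hrel, hs.1.2]⟩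
  have hmid : s ∈ openSegment ℝ (s + τ • μ') (s + (-τ) • μ') :=
    ⟨1/2, 1/2, by norm_num, by norm_num, by norm_num, by ext; simp; ring⟩
  have heq := hs.2 (hmem τ hτ₁) (hmem (-τ) hτ₂) hmid
  have : τ = 0 ∨ μ i₀ = 0 := by simpa [μ', hi₀] using congr_fun heq i₀
  exact this.elim hτ0 hμi₀

theorem exists_finset_sum_sub_sum_smul_le (v : ι → E) {θ : ℝ} (hθ : 0 ≤ θ)
    (hv : ∀ i, ‖v i‖ ≤ θ) {t : ι → ℝ} (ht : t ∈ Set.Icc 0 1) :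
    ∃ S : Finset ι, ‖∑ i ∈ S, v i - ∑ i, t i • v i‖ ≤ Module.finrank ℝ E * θ := by
  set P := {s : ι → ℝ | s ∈ Set.Icc 0 1 ∧ ∑ i, s i • v i = ∑ i, t i • v i}
  have hP : IsCompact P := isCompact_Icc.inter_right <| isClosed_eq
    (continuous_finsetSum _ fun i _ => (continuous_apply i).smul continuous_const)
    continuous_const
  obtain ⟨s, hs⟩ := hP.extremePoints_nonempty ⟨t, ht, rfl⟩
  have hs01 (i : ι) : s i ∈ Set.Icc 0 1 := ⟨hs.1.1.1 i, hs.1.1.2 i⟩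
  refine ⟨({i | s i = 1} : Finset ι), ?_⟩
  have hsplit : ∑ i with s i = 1, v i - ∑ i, s i • v i
      = ∑ i with s i ∈ Set.Ioo 0 1, (-s i) • v i := by
    rw [sum_filter, sum_filter, ← sum_sub_distrib]
    refine sum_congr rfl fun i _ => ?_
    obtain ⟨h0, h1⟩ := hs01 i
    rcases h0.eq_or_lt with h0 | h0
    · simp [← h0]
    rcases h1.eq_or_lt with h1 | h1
    · simp [h1]
    simp [h0, h1, h1.ne]
  rw [← hs.1.2, hsplit]
  calc ‖∑ i with s i ∈ Set.Ioo 0 1, (-s i) • v i‖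
      ≤ ∑ i with s i ∈ Set.Ioo 0 1, θ := by
        refine (norm_sum_le _ _).trans (sum_le_sum fun i _ => ?_)
        rw [norm_smul, norm_neg, Real.norm_of_nonneg (hs01 i).1]
        exact (mul_le_mul (hs01 i).2 (hv i) (norm_nonneg _) zero_le_one).trans_eq (one_mul θ)
    _ ≤ Module.finrank ℝ E * θ := by
        rw [sum_const, nsmul_eq_mul]
        gcongr
        exact_mod_cast card_fractional_le_finrank_of_mem_extremePoints v hs

end Rounding

section TailSums

variable {E : Type*} [NormedAddCommGroup E] [NormedSpace ℝ E] {v : ℕ → E} {N : ℕ}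

def tailZonotope (v : ℕ → E) (N : ℕ) : Set E :=
  Finsupp.linearCombination ℝ v '' {c | ∀ m, c m ∈ Set.Icc 0 1 ∧ (m < N → c m = 0)}

lemma convex_tailZonotope : Convex ℝ (tailZonotope v N) := by
  refine Convex.linear_image (fun c hc c' hc' a b ha hb hab m => ?_) _
  exact ⟨convex_Icc 0 1 (hc m).1 (hc' m).1 ha hb hab,
    fun hm => by simp [(hc m).2 hm, (hc' m).2 hm]⟩

lemma sum_mem_tailZonotope {S : Finset ℕ} (hS : ∀ m ∈ S, N ≤ m) :
    ∑ m ∈ S, v m ∈ tailZonotope v N := by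
  refine ⟨∑ m ∈ S, Finsupp.single m 1, fun m => ?_, by simp [map_sum]⟩
  by_cases hm : m ∈ S
  · simpa [Finsupp.finsetSum_apply, Finsupp.single_apply, hm] using hS m hm
  · simp [Finsupp.finsetSum_apply, Finsupp.single_apply, hm]

/-- Hahn–Banach: a point outside the closed convex hull of the tail zonotope is separated from
it by a functional `φ`, but the zonotope contains `∑_{N ≤ m < M, φ vₘ > 0} vₘ`, on which `φ`
is unbounded. -/
lemma mem_closure_tailZonotope
    (hpos : ∀ φ : E →L[ℝ] ℝ, φ ≠ 0 → Tendsto (fun M => ∑ m ∈ Ico N M, (φ (v m))⁺) atTop atTop)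
    (y : E) : y ∈ closure (tailZonotope v N) := by
  by_contra hy
  obtain ⟨φ, u, hφu, huy⟩ :=
    geometric_hahn_banach_closed_point convex_tailZonotope.closure isClosed_closure hy
  have hu : 0 < u := by
    simpa using hφu 0 (subset_closure ⟨0, by simp, by simp⟩)
  have hφ : φ ≠ 0 := by
    rintro rfl
    exact (hu.trans huy).ne' (zero_apply y)
  obtain ⟨M, hM⟩ := ((hpos φ hφ).eventually_gt_atTop u).exists
  set S := {m ∈ Ico N M | 0 < φ (v m)}
  have hS : φ (∑ m ∈ S, v m) = ∑ m ∈ Ico N M, (φ (v m))⁺ := by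
    rw [map_sum, sum_filter]
    refine sum_congr rfl fun m _ => ?_
    split_ifs with h
    · exact (posPart_eq_self.2 h.le).symm
    · exact (posPart_eq_zero.2 (not_lt.1 h)).symm
  have hSN : ∀ m ∈ S, N ≤ m := fun m hm => (mem_Ico.1 (mem_filter.1 hm).1).1
  have := hφu _ (subset_closure (sum_mem_tailZonotope hSN))
  linarith

theorem exists_finset_sum_near [FiniteDimensional ℝ E] (hv : Tendsto v atTop (𝓝 0))
    (hpos : ∀ φ : E →L[ℝ] ℝ, φ ≠ 0 → ∀ N,
      Tendsto (fun M => ∑ m ∈ Ico N M, (φ (v m))⁺) atTop atTop)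
    (N : ℕ) (y : E) {η : ℝ} (hη : 0 < η) :
    ∃ S : Finset ℕ, (∀ m ∈ S, N ≤ m) ∧ ‖∑ m ∈ S, v m - y‖ < η := by
  obtain ⟨θ, hθ, hr⟩ : ∃ θ : ℝ, 0 < θ ∧ Module.finrank ℝ E * θ < η / 2 := by
    refine ⟨η / 2 / (Module.finrank ℝ E + 1), by positivity, ?_⟩
    rw [mul_div_assoc', div_lt_iff₀ (by positivity)]
    nlinarith
  obtain ⟨N₁, hN₁⟩ := eventually_atTop.1 (hv.eventually (Metric.closedBall_mem_nhds 0 hθ))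
  obtain ⟨z, ⟨c, hc, rfl⟩, hyz⟩ :=
    Metric.mem_closure_iff.1 (mem_closure_tailZonotope (hpos · · (max N N₁)) y) (η / 2)
      (half_pos hη)
  have hc_supp : ∀ m ∈ c.support, max N N₁ ≤ m := fun m hm =>
    not_lt.1 fun h => Finsupp.mem_support_iff.1 hm ((hc m).2 h)
  obtain ⟨S, hS⟩ := exists_finset_sum_sub_sum_smul_le (fun m : c.support => v m) hθ.le
    (fun m => by simpa using hN₁ m ((le_max_right _ _).trans (hc_supp m m.2)))
    (t := fun m => c m) ⟨fun m => (hc m).1.1, fun m => (hc m).1.2⟩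
  refine ⟨S.map (Function.Embedding.subtype _), fun m hm => ?_, ?_⟩
  · obtain ⟨m, -, rfl⟩ := mem_map.1 hm
    exact (le_max_left _ _).trans (hc_supp m m.2)
  have hz : Finsupp.linearCombination ℝ v c = ∑ m : c.support, c m • v m := by
    rw [Finsupp.linearCombination_apply, Finsupp.sum, ← sum_coe_sort]
  calc ‖∑ m ∈ S.map (Function.Embedding.subtype _), v m - y‖
      ≤ ‖∑ m ∈ S, v m - Finsupp.linearCombination ℝ v c‖
        + ‖Finsupp.linearCombination ℝ v c - y‖ := by
        rw [sum_map]
        exact norm_sub_le_norm_sub_add_norm_sub _ _ _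
    _ < η / 2 + η / 2 := by
        rw [dist_comm, dist_eq_norm] at hyz
        exact add_lt_add_of_le_of_lt (hz ▸ hS.trans hr.le) hyz
    _ = η := add_halves η

end TailSums

section ListSums

variable {α M : Type*}

lemma List.map_getD_range_length (l : List α) (x : α) :
    (List.range l.length).map (fun k => l.getD k x) = l :=
  List.ext_getElem (by simp) fun k _ hk => by simp [List.getElem?_eq_getElem hk]

lemma List.sum_range_getD_eq_sum_take [AddCommMonoid M] (l : List α) (x : α) (u : α → M)
    {j : ℕ} (hj : j ≤ l.length) :
    ∑ k ∈ Finset.range j, u (l.getD k x) = ((l.take j).map u).sum := by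
  induction j with
  | zero => simp
  | succ j ih =>
    rw [Finset.sum_range_succ, ih (by omega), List.map_take, List.map_take,
      List.sum_take_succ _ _ (by simpa using hj)]
    simp [List.getElem?_eq_getElem (show j < l.length by omega)]

lemma List.map_range_perm_range_of_bijOn {σ : ℕ → ℕ} {n : ℕ}
    (hσ : Set.BijOn σ (Set.Iio n) (Set.Iio n)) : ((List.range n).map σ).Perm (List.range n) := by
  refine (List.perm_ext_iff_of_nodup (List.nodup_range.map_on fun x hx y hy hxy =>
    hσ.injOn (by simpa using hx) (by simpa using hy) hxy) List.nodup_range).2 fun a => ?_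
  simp only [List.mem_map, List.mem_range]
  exact ⟨fun ⟨k, hk, hka⟩ => hka ▸ hσ.mapsTo hk, fun ha => hσ.surjOn ha⟩

lemma List.exists_take_reduceOption_eq (L : List (Option α)) (j : ℕ) :
    ∃ j', L.reduceOption.take j = (L.take j').reduceOption := by
  induction L generalizing j with
  | nil => exact ⟨0, by simp⟩
  | cons o L ih =>
    rcases o with _ | x
    · obtain ⟨j', hj'⟩ := ih j
      exact ⟨j' + 1, by simpa using hj'⟩
    · rcases j with _ | j
      · exact ⟨0, by simp⟩
      · obtain ⟨j', hj'⟩ := ih j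
        exact ⟨j' + 1, by simpa using hj'⟩

lemma List.sum_map_elim_eq [AddCommMonoid M] (u : M) (v : α → M) (L : List (Option α)) :
    (L.map fun o => o.elim u v).sum = (L.reduceOption.map v).sum + L.countP Option.isNone • u := by
  induction L with
  | nil => simp
  | cons o L ih =>
    rcases o with _ | x
    · simp [ih, succ_nsmul]
      abel
    · simp [ih, add_assoc]

end ListSums

section PolygonalConfinement

variable {d : ℕ} {C : ℝ}

lemma bijOn_Iio_ite_zero {q : ℕ → ℕ} {n : ℕ} (hn : 0 < n)
    (hq : Set.BijOn q (Set.Ico 1 n) (Set.Ico 1 n)) :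
    Set.BijOn (fun k => if k = 0 then 0 else q k) (Set.Iio n) (Set.Iio n) := by
  have hIio : Set.Iio n = insert 0 (Set.Ico 1 n) := by
    ext k
    simp only [Set.mem_Iio, Set.mem_insert_iff, Set.mem_Ico]
    omega
  have h := (hq.congr (f₂ := fun k => if k = 0 then 0 else q k) fun k hk => by
    simp [Nat.one_le_iff_ne_zero.1 hk.1]).insert (a := 0) (by simp)
  simpa [← hIio] using h

lemma PolyConf.exists_perm {α : Type*} (hC : PolyConf d C) (val : α → EuclideanSpace ℝ (Fin d))
    {r : ℝ} (hr : 0 < r) {l : List α} (hl : l ≠ []) (hsum : (l.map val).sum = 0)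
    (hle : ∀ x ∈ l, ‖val x‖ ≤ r) :
    ∃ l' : List α, l'.Perm l ∧ ∀ j, ‖((l'.take j).map val).sum‖ ≤ C * r := by
  set n := l.length
  set x₀ := l.head hl
  set w : ℕ → EuclideanSpace ℝ (Fin d) := fun k => r⁻¹ • val (l.getD k x₀)
  have hn : 0 < n := List.length_pos_iff.2 hl
  obtain ⟨q, hq, hqC⟩ := hC n hn w
    (by rw [← smul_sum, l.sum_range_getD_eq_sum_take x₀ val le_rfl, List.take_length, hsum,
      smul_zero])
    (fun k hk => by
      rw [norm_smul, norm_inv, Real.norm_of_nonneg hr.le, inv_mul_le_one₀ hr]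
      exact hle _ (by simp [List.getElem?_eq_getElem hk]))
  set σ : ℕ → ℕ := fun k => if k = 0 then 0 else q k
  set l' := (List.range n).map (fun k => l.getD (σ k) x₀)
  have hl' : l'.length = n := by simp [l']
  refine ⟨l', ?_, ?_⟩
  · have := (List.map_range_perm_range_of_bijOn (bijOn_Iio_ite_zero hn hq)).map
      (fun k => l.getD k x₀)
    rwa [List.map_map, List.map_getD_range_length] at this
  have hC0 : 0 ≤ C := (norm_nonneg _).trans (by simpa using hqC 0 (Nat.zero_le n))
  suffices key : ∀ j ≤ n, ‖((l'.take j).map val).sum‖ ≤ C * r by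
    intro j
    rw [List.take_eq_take_min, hl']
    exact key _ (min_le_right _ _)
  intro j hj
  have hsum_l' : ∑ k ∈ range j, val (l'.getD k x₀) = r • ∑ k ∈ range j, w (σ k) := by
    rw [smul_sum]
    refine sum_congr rfl fun k hk => ?_
    simp [l', w, smul_smul, hr.ne', (mem_range.1 hk).trans_le hj]
  rw [← l'.sum_range_getD_eq_sum_take x₀ val (hl' ▸ hj), hsum_l', norm_smul,
    Real.norm_of_nonneg hr.le, mul_comm]
  gcongr
  rcases j with _ | j
  · simpa using hC0
  have hsplit : ∑ k ∈ range (j + 1), w (σ k) = w 0 + ∑ k ∈ Ico 1 (j + 1), w (q k) := by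
    rw [sum_range_eq_add_Ico _ j.succ_pos]
    congr 1
    exact sum_congr rfl fun k hk => by simp [σ, Nat.one_le_iff_ne_zero.1 (mem_Ico.1 hk).1]
  exact hsplit ▸ hqC (j + 1) hj

lemma exists_nsmul_eq_neg_of_norm_le {F : Type*} [NormedAddCommGroup F] [NormedSpace ℝ F]
    (T : F) {b : ℝ} (hb : 0 < b) :
    ∃ R : ℕ, ∃ u : F, 0 < R ∧ R • u = -T ∧ ‖u‖ ≤ b ∧ R * ‖u‖ = ‖T‖ := by
  set R := ⌈‖T‖ / b⌉₊ + 1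
  have hR : (0 : ℝ) < R := by positivity
  refine ⟨R, -((R : ℝ)⁻¹ • T), Nat.succ_pos _, ?_, ?_, ?_⟩
  · rw [← Nat.cast_smul_eq_nsmul ℝ, smul_neg, smul_smul, mul_inv_cancel₀ hR.ne', one_smul]
  · rw [norm_neg, norm_smul, norm_inv, Real.norm_of_nonneg hR.le, inv_mul_le_iff₀ hR,
      ← div_le_iff₀ hb]
    exact (Nat.le_ceil _).trans (by simp [R])
  · rw [norm_neg, norm_smul, norm_inv, Real.norm_of_nonneg hR.le, mul_inv_cancel_left₀ hR.ne']

/-- Pad `l` with `R` copies of `u = -(∑ l)/R`, which makes the total zero, apply polygonal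
confinement, and delete the copies again: a prefix then loses at most `R ‖u‖ = ‖∑ l‖`. -/
theorem PolyConf.exists_perm_sum_take_le {α : Type*} (hC : PolyConf d C) (hCpos : 0 < C)
    (v : α → EuclideanSpace ℝ (Fin d)) {c : ℝ} (hc : 0 < c) {l : List α}
    (hv : ∀ x ∈ l, ‖v x‖ ≤ c / C) :
    ∃ l' : List α, l'.Perm l ∧ ∀ j, ‖((l'.take j).map v).sum‖ ≤ c + ‖(l.map v).sum‖ := by
  obtain ⟨R, u, hR, hRu, huc, hu⟩ :=
    exists_nsmul_eq_neg_of_norm_le (l.map v).sum (div_pos hc hCpos)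
  set L : List (Option α) := List.replicate R none ++ l.map some
  have hLR : L.countP Option.isNone = R := by simp [L, List.countP_replicate, Function.comp_def]
  have hLl : L.reduceOption = l := by simp [L, List.reduceOption, List.filterMap_map]
  obtain ⟨L', hL'L, hL'⟩ := hC.exists_perm (fun o => o.elim u v) (div_pos hc hCpos)
    (l := L) (by simp [L, hR.ne']) (by rw [List.sum_map_elim_eq, hLl, hLR, hRu, add_neg_cancel])
    (by simp only [L, List.mem_append, List.mem_replicate, List.mem_map]
        rintro _ (⟨-, rfl⟩ | ⟨x, hx, rfl⟩)
        exacts [huc, hv x hx])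
  refine ⟨L'.reduceOption, hLl ▸ hL'L.filterMap id, fun j => ?_⟩
  obtain ⟨j', hj'⟩ := L'.exists_take_reduceOption_eq j
  set k := (L'.take j').countP Option.isNone
  have hk : k ≤ R := hLR ▸ hL'L.countP_eq _ ▸ (List.take_sublist _ _).countP_le
  have h := hL' j'
  rw [List.sum_map_elim_eq, mul_div_cancel₀ _ hCpos.ne'] at h
  rw [hj']
  calc ‖((L'.take j').reduceOption.map v).sum‖ ≤ c + ‖k • u‖ := by
        have := norm_sub_le (((L'.take j').reduceOption.map v).sum + k • u) (k • u)
        rw [add_sub_cancel_right] at this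
        linarith
    _ ≤ c + ‖(l.map v).sum‖ := by
        rw [← hu, ← Nat.cast_smul_eq_nsmul ℝ, norm_smul, Real.norm_natCast]
        gcongr

end PolygonalConfinement

section ListInjections

variable {α : Type*}

lemma List.Nodup.injOn_getD {L : List α} (hL : L.Nodup) (x : α) :
    Set.InjOn (fun k => L.getD k x) (Set.Iio L.length) :=
  fun i (hi : i < _) j (hj : j < _) hij => by
    simp only [List.getD_eq_getElem _ x hi, List.getD_eq_getElem _ x hj] at hij
    exact hL.getElem_inj_iff.1 hij

lemma List.exists_lt_length_getD_eq {L : List α} {m : α} (hm : m ∈ L) (x : α) :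
    ∃ k < L.length, L.getD k x = m := by
  obtain ⟨k, hk, rfl⟩ := List.mem_iff_getElem.1 hm
  exact ⟨k, hk, List.getD_eq_getElem _ _ hk⟩

lemma List.le_length_of_forall_lt_mem {L : List ℕ} {n : ℕ} (h : ∀ m < n, m ∈ L) :
    n ≤ L.length :=
  calc n = #(Finset.range n) := (card_range n).symm
    _ ≤ #L.toFinset := card_le_card fun m hm => List.mem_toFinset.2 (h m (mem_range.1 hm))
    _ ≤ L.length := List.toFinset_card_le L

variable {f : ℕ → ℕ} {nf : ℕ} {l : List ℕ}

def extendList (f : ℕ → ℕ) (nf : ℕ) (l : List ℕ) : List ℕ := (List.range nf).map f ++ l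

lemma length_extendList : (extendList f nf l).length = nf + l.length := by
  simp [extendList]

lemma getD_extendList_of_lt {k : ℕ} (hk : k < nf) : (extendList f nf l).getD k 0 = f k := by
  rw [extendList, List.getD_append _ _ _ _ (by simpa using hk),
    List.getD_eq_getElem _ _ (by simpa using hk)]
  simp

lemma getD_extendList_add (t : ℕ) : (extendList f nf l).getD (nf + t) 0 = l.getD t 0 := by
  rw [extendList, List.getD_append_right _ _ _ _ (by simp), List.length_map, List.length_range,
    Nat.add_sub_cancel_left]

lemma mem_extendList {m : ℕ} : m ∈ extendList f nf l ↔ m ∈ f '' Set.Iio nf ∨ m ∈ l := by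
  simp [extendList]

lemma nodup_extendList (hf : Set.InjOn f (Set.Iio nf)) (hl : l.Nodup)
    (hdisj : ∀ m ∈ l, m ∉ f '' Set.Iio nf) : (extendList f nf l).Nodup := by
  refine List.nodup_append.2 ⟨List.nodup_range.map_on fun i hi j hj hij =>
    hf (by simpa using hi) (by simpa using hj) hij, hl, fun m hm m' hm' hmm' => ?_⟩
  subst hmm'
  exact hdisj m hm' (by simpa using hm)

lemma sum_Ico_extendList {M : Type*} [AddCommMonoid M] (u : ℕ → M) {m : ℕ}
    (hm : m ≤ nf + l.length) :
    ∑ k ∈ Ico nf m, u ((extendList f nf l).getD k 0) = ((l.take (m - nf)).map u).sum := by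
  rw [sum_Ico_eq_sum_range]
  simp only [getD_extendList_add]
  exact l.sum_range_getD_eq_sum_take 0 u (by omega)

lemma sum_range_extendList {M : Type*} [AddCommMonoid M] (u : ℕ → M) :
    ∑ k ∈ range (nf + l.length), u ((extendList f nf l).getD k 0)
      = ∑ k ∈ range nf, u (f k) + (l.map u).sum := by
  rw [← sum_range_add_sum_Ico _ (Nat.le_add_right nf l.length), sum_Ico_extendList u le_rfl,
    Nat.add_sub_cancel_left, List.take_length]
  congr 1
  exact sum_congr rfl fun k hk => by rw [getD_extendList_of_lt (mem_range.1 hk)]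

end ListInjections

section Condition

variable {a : ℕ → ℕ → ℝ} {x : ℕ → ℝ} {C : ℕ → ℝ}

theorem exists_finset_sum_avec_near (hcc : ∀ i, CondConv (a i))
    (hind : ∀ c : ℕ → ℝ, (Function.support c).Finite →
      (Summable fun n => |∑ᶠ i, c i * a i n|) → c = 0)
    (e N : ℕ) (y : EuclideanSpace ℝ (Fin e)) {η : ℝ} (hη : 0 < η) :
    ∃ S : Finset ℕ, (∀ m ∈ S, N ≤ m) ∧ ‖∑ m ∈ S, avec a e m - y‖ < η := by
  refine exists_finset_sum_near (tendsto_avec_atTop_zero hcc e) (fun φ hφ N => ?_) N y hη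
  obtain ⟨s, hs⟩ := exists_tendsto_sum_range_avec hcc e
  refine tendsto_sum_Ico_posPart_atTop (l := φ s) ?_ (not_summable_abs_apply_avec hind hφ) N
  simpa [Function.comp_def, map_sum] using (φ.continuous.tendsto s).comp hs

lemma finite_setOf_le_norm_avec (hcc : ∀ i, CondConv (a i)) (e : ℕ) {θ : ℝ} (hθ : 0 < θ) :
    {m | θ ≤ ‖avec a e m‖}.Finite := by
  have h := (tendsto_norm_zero.comp (tendsto_avec_atTop_zero hcc e)).eventually (gt_mem_nhds hθ)
  rw [← Nat.cofinite_eq_atTop, eventually_cofinite] at h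
  simpa using h

/-- The forced indices are completed by a subset of a tail beyond them and beyond `f ↾ nf`. -/
theorem exists_new_indices (hcc : ∀ i, CondConv (a i))
    (hind : ∀ c : ℕ → ℝ, (Function.support c).Finite →
      (Summable fun n => |∑ᶠ i, c i * a i n|) → c = 0)
    (f : ℕ → ℕ) (nf e n : ℕ) {θ η : ℝ} (hθ : 0 < θ) (hη : 0 < η) :
    ∃ F : Finset ℕ, (∀ m ∈ F, m ∉ f '' Set.Iio nf) ∧
      (∀ m ∉ f '' Set.Iio nf, m < n ∨ θ ≤ ‖avec a e m‖ → m ∈ F) ∧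
      ‖∑ k ∈ range nf, avec a e (f k) + ∑ m ∈ F, avec a e m - xvec x e‖ < η := by
  set B := (range nf).image f
  set A := (range n ∪ (finite_setOf_le_norm_avec hcc e hθ).toFinset) \ B
  obtain ⟨N, hN⟩ := (A ∪ B).exists_nat_subset_range
  obtain ⟨S, hSN, hS⟩ := exists_finset_sum_avec_near hcc hind e N
    (xvec x e - ∑ k ∈ range nf, avec a e (f k) - ∑ m ∈ A, avec a e m) hη
  have hSAB : ∀ m ∈ S, m ∉ A ∪ B := fun m hm h => (hSN m hm).not_gt (mem_range.1 (hN h))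
  refine ⟨A ∪ S, fun m hm hmf => ?_, fun m hmf hm => mem_union_left _ ?_, ?_⟩
  · rcases mem_union.1 hm with hmA | hmS
    · exact (mem_sdiff.1 hmA).2 (by simpa [B] using hmf)
    · exact hSAB m hmS (mem_union_right _ (by simpa [B] using hmf))
  · simpa [A, B, hm] using hmf
  · rw [sum_union (disjoint_right.2 fun m hm hmA => hSAB m hm (mem_union_left _ hmA))]
    convert hS using 2
    abel

def dropLast (d : ℕ) : EuclideanSpace ℝ (Fin (d + 1)) →ₗ[ℝ] EuclideanSpace ℝ (Fin d) where
  toFun z := WithLp.toLp 2 fun i => z i.castSucc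
  map_add' _ _ := rfl
  map_smul' _ _ := rfl

lemma norm_dropLast_le (d : ℕ) (z : EuclideanSpace ℝ (Fin (d + 1))) : ‖dropLast d z‖ ≤ ‖z‖ := by
  simp only [EuclideanSpace.norm_eq, Fin.sum_univ_castSucc (fun i => ‖z i‖ ^ 2)]
  exact Real.sqrt_le_sqrt (le_add_of_nonneg_right (sq_nonneg _))

lemma dropLast_avec (d m : ℕ) : dropLast d (avec a (d + 1) m) = avec a d m := rfl

lemma dropLast_xvec (d : ℕ) : dropLast d (xvec x (d + 1)) = xvec x d := rfl

lemma norm_sum_avec_le (d : ℕ) (g : ℕ → ℕ) (s F : Finset ℕ) :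
    ‖∑ m ∈ F, avec a d m‖ ≤ ‖∑ k ∈ s, avec a (d + 1) (g k) + ∑ m ∈ F, avec a (d + 1) m
      - xvec x (d + 1)‖ + ‖∑ k ∈ s, avec a d (g k) - xvec x d‖ := by
  have hproj := norm_dropLast_le d
    (∑ k ∈ s, avec a (d + 1) (g k) + ∑ m ∈ F, avec a (d + 1) m - xvec x (d + 1))
  simp only [map_sub, map_add, map_sum, dropLast_avec, dropLast_xvec] at hproj
  have htri (u v w : EuclideanSpace ℝ (Fin d)) : ‖v‖ ≤ ‖u + v - w‖ + ‖u - w‖ := by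
    have := norm_sub_le (u + v - w) (u - w)
    rwa [show u + v - w - (u - w) = v by abel] at this
  exact (htri _ _ _).trans (add_le_add_left hproj _)

variable {f : ℕ → ℕ} {nf : ℕ} {l : List ℕ} {d e : ℕ} {δ ε : ℚ}

lemma pcond_extendList (hf : Set.InjOn f (Set.Iio nf)) (hl : l.Nodup)
    (hdisj : ∀ m ∈ l, m ∉ f '' Set.Iio nf) (he : 0 < e) (hδ : 0 < δ)
    (herr : ‖∑ k ∈ range nf, avec a e (f k) + (l.map (avec a e)).sum - xvec x e‖ < δ)
    (htail : ∀ m, m ∉ f '' Set.Iio nf → m ∉ l → ‖avec a e m‖ < δ / C e) :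
    PCond a x C (fun k => (extendList f nf l).getD k 0) (nf + l.length) e δ := by
  refine ⟨length_extendList (f := f) ▸ (nodup_extendList hf hl hdisj).injOn_getD 0, he, hδ,
    by rwa [sum_range_extendList], fun m hm => ?_⟩
  have hm' : m ∉ extendList f nf l := fun hmL => hm <| by
    simpa [length_extendList] using List.exists_lt_length_getD_eq hmL 0
  rw [mem_extendList, not_or] at hm'
  exact htail m hm'.1 hm'.2

lemma ple_extendList (hde : d ≤ e)
    (hpartial : ∀ j, ‖((l.take j).map (avec a d)).sum‖ < 2 * (ε : ℝ))
    (hfinal : 2 * (δ : ℝ) + ‖(l.map (avec a d)).sum‖ ≤ 2 * ε) :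
    PLe a (fun k => (extendList f nf l).getD k 0) (nf + l.length) e δ f nf d ε := by
  refine ⟨Nat.le_add_right _ _, fun k hk => getD_extendList_of_lt hk, hde,
    fun m hm => ?_, ?_⟩
  · rw [sum_Ico_extendList _ hm]
    exact hpartial _
  · rwa [sum_Ico_extendList _ le_rfl, Nat.add_sub_cancel_left, List.take_length]

end Condition

theorem density_lemma_general (a : ℕ → ℕ → ℝ) (x : ℕ → ℝ) (C : ℕ → ℝ)
    (hCpos : ∀ d, 0 < d → 0 < C d)
    (hCpc : ∀ d, 0 < d → PolyConf d (C d))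
    (hcc : ∀ i, CondConv (a i))
    (hind : ∀ c : ℕ → ℝ, (Function.support c).Finite →
      (Summable fun n => |∑ᶠ i, c i * a i n|) → c = 0)
    (f : ℕ → ℕ) (nf d : ℕ) (ε : ℚ)
    (hf : PCond a x C f nf d ε)
    (n : ℕ) (hn : 0 < n) :
    ∃ g : ℕ → ℕ, ∃ ng : ℕ, ∃ δ : ℚ,
      PCond a x C g ng (d + 1) δ ∧
      PLe a g ng (d + 1) δ f nf d ε ∧
      n ≤ ng ∧ (∀ m < n, ∃ k < ng, g k = m) ∧ (δ : ℝ) < 1 / n := by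
  obtain ⟨hfinj, hd, hε, hfx, hsmall⟩ := hf
  obtain ⟨δ, hδ, hδ_lt⟩ := exists_pos_rat_lt (lt_min (div_pos (sub_pos.2 hfx) three_pos)
    (one_div_pos.2 (Nat.cast_pos.2 hn)))
  obtain ⟨hδε, hδn⟩ := lt_min_iff.1 hδ_lt
  have hε' : (0 : ℝ) < ε := by exact_mod_cast hε
  have hδ' : (0 : ℝ) < δ := by exact_mod_cast hδ
  obtain ⟨F, hFf, hFcov, hFerr⟩ := exists_new_indices (x := x) hcc hind f nf (d + 1) n
    (div_pos hδ' (hCpos _ d.succ_pos)) (half_pos hδ')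
  have hFd := norm_sum_avec_le (a := a) (x := x) d f (range nf) F
  obtain ⟨l, hlF, hl⟩ := (hCpc d hd).exists_perm_sum_take_le (hCpos d hd) (avec a d) hε'
    (l := F.toList) (fun m hm => (hsmall m (hFf m (mem_toList.1 hm))).le)
  have hmem (m : ℕ) : m ∈ l ↔ m ∈ F := hlF.mem_iff.trans mem_toList
  have hsum (e : ℕ) : (l.map (avec a e)).sum = ∑ m ∈ F, avec a e m :=
    (hlF.map _).sum_eq.trans (sum_map_toList _ _)
  have hcover (m : ℕ) (hm : m < n) : m ∈ extendList f nf l :=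
    mem_extendList.2 (or_iff_not_imp_left.2 fun hmf => (hmem m).2 (hFcov m hmf (.inl hm)))
  refine ⟨fun k => (extendList f nf l).getD k 0, nf + l.length, δ, ?_, ?_, ?_, ?_, hδn⟩
  · exact pcond_extendList hfinj (hlF.nodup_iff.2 F.nodup_toList)
      (fun m hm => hFf m ((hmem m).1 hm)) d.succ_pos hδ (by rw [hsum]; linarith)
      (fun m hmf hml => lt_of_not_ge fun h => hml ((hmem m).2 (hFcov m hmf (.inr h))))
  · exact ple_extendList d.le_succ (fun j => (hl j).trans_lt (by rw [sum_map_toList]; linarith))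
      (by rw [hsum]; linarith)
  · exact length_extendList (f := f) ▸ List.le_length_of_forall_lt_mem hcover
  · intro m hm
    exact length_extendList (f := f) ▸ List.exists_lt_length_getD_eq (hcover m hm) 0

/-- The density lemma: below every condition `(f, d, ε)` of `P` and for every
positive `n` there is a condition `(g, d+1, δ)` with `{0,…,n−1}` contained in
both the domain and the range of `g`, and `δ < 1/n`. -/
theorem density_lemma (a : ℕ → ℕ → ℝ) (x : ℕ → ℝ) (C : ℕ → ℝ)
    (hCpos : ∀ d, 0 < d → 0 < C d)
    (hCpc : ∀ d, 0 < d → PolyConf d (C d))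
    (hCmono : ∀ d e, 0 < d → d ≤ e → C d ≤ C e)
    (hcc : ∀ i, CondConv (a i))
    (hind : ∀ c : ℕ → ℝ, (Function.support c).Finite →
      (Summable fun n => |∑ᶠ i, c i * a i n|) → c = 0)
    (f : ℕ → ℕ) (nf d : ℕ) (ε : ℚ)
    (hf : PCond a x C f nf d ε)
    (n : ℕ) (hn : 0 < n) :
    ∃ g : ℕ → ℕ, ∃ ng : ℕ, ∃ δ : ℚ,
      PCond a x C g ng (d + 1) δ ∧
      PLe a g ng (d + 1) δ f nf d ε ∧
      n ≤ ng ∧ (∀ m < n, ∃ k < ng, g k = m) ∧ (δ : ℝ) < 1 / n :=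
  density_lemma_general a x C hCpos hCpc hcc hind f nf d ε hf n hn
end

section
/- Let ⟨aⁱ : i < ω⟩ be an independent sequence of conditionally convergent real series, let ⟨xᵢ : i < ω⟩ be a sequence of real numbers, let ⟨C_d : d ≥ 1⟩ be a nondecreasing sequence of positive constants satisfying the Polygonal Confinement property, and let P be the poset of conditions (f, d, ε) defined from these data. Suppose ⟨(f_n, d_n, ε_n) : n ∈ ℕ⟩ is a descending sequence in P such that p = ⋃_n f_n is a permutation of ℕ, sup_n d_n = ∞, and lim_{n→∞} ε_n = 0. Then for every i ∈ ℕ, the series Σ_{j∈ℕ} aⁱ_{p(j)} converges to xᵢ. -/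
open Filter

/-!
Below a condition `(f, d, ε)` with `i < d`, every stronger condition `g` extends `f` and its new
terms have partial sums of norm `< 2ε` in `ℝ^d`, hence `< 2ε` in coordinate `i`. Since the sum of
the `f`-terms is `ε`-close to `xᵢ`, every partial sum of `Σ_k aⁱ_{g(k)}` past `dom f` is
`3ε`-close to `xᵢ`. The permutation `p` agrees with a condition of the sequence on every initial
segment, and `ε_n → 0` while `d_n → ∞`.
-/

open Finset

lemma avec_sum_apply (a : ℕ → ℕ → ℝ) {d : ℕ} (s : Finset ℕ) (g : ℕ → ℕ) (i : Fin d) :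
    (∑ k ∈ s, avec a d (g k)) i = ∑ k ∈ s, a i (g k) := by
  simp [avec, WithLp.ofLp_sum]

lemma abs_sum_le_norm_sum_avec (a : ℕ → ℕ → ℝ) {d i : ℕ} (hi : i < d) (s : Finset ℕ)
    (g : ℕ → ℕ) : |∑ k ∈ s, a i (g k)| ≤ ‖∑ k ∈ s, avec a d (g k)‖ := by
  simpa [avec_sum_apply] using PiLp.norm_apply_le (∑ k ∈ s, avec a d (g k)) ⟨i, hi⟩

lemma abs_sum_sub_le_norm_sum_avec_sub (a : ℕ → ℕ → ℝ) (x : ℕ → ℝ) {d i : ℕ} (hi : i < d)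
    (s : Finset ℕ) (g : ℕ → ℕ) :
    |∑ k ∈ s, a i (g k) - x i| ≤ ‖∑ k ∈ s, avec a d (g k) - xvec x d‖ := by
  simpa [avec_sum_apply, xvec] using
    PiLp.norm_apply_le (∑ k ∈ s, avec a d (g k) - xvec x d) ⟨i, hi⟩

lemma abs_sum_sub_lt_of_pLe {a : ℕ → ℕ → ℝ} {x : ℕ → ℝ} {C : ℕ → ℝ} {f g : ℕ → ℕ}
    {nf ng d e : ℕ} {ε δ : ℚ} (hf : PCond a x C f nf d ε) (hgf : PLe a g ng e δ f nf d ε)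
    {i N : ℕ} (hi : i < d) (hfN : nf ≤ N) (hNg : N ≤ ng) :
    |∑ k ∈ range N, a i (g k) - x i| < 3 * ε := by
  have hold : |∑ k ∈ range nf, a i (g k) - x i| < ε := by
    rw [sum_congr rfl fun k hk => by rw [hgf.2.1 k (mem_range.mp hk)]]
    exact (abs_sum_sub_le_norm_sum_avec_sub a x hi _ f).trans_lt hf.2.2.2.1
  have hnew : |∑ k ∈ Ico nf N, a i (g k)| < 2 * ε :=
    (abs_sum_le_norm_sum_avec a hi _ g).trans_lt (hgf.2.2.2.1 N hNg)
  calc |∑ k ∈ range N, a i (g k) - x i|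
      = |(∑ k ∈ range nf, a i (g k) - x i) + ∑ k ∈ Ico nf N, a i (g k)| := by
        rw [← sum_range_add_sum_Ico _ hfN]; ring_nf
    _ ≤ |∑ k ∈ range nf, a i (g k) - x i| + |∑ k ∈ Ico nf N, a i (g k)| := abs_add_le _ _
    _ < 3 * ε := by linarith

theorem descending_sequence_gives_rearrangement_general
    (a : ℕ → ℕ → ℝ) (x : ℕ → ℝ) (C : ℕ → ℝ)
    (f : ℕ → ℕ → ℕ) (len : ℕ → ℕ) (d : ℕ → ℕ) (ε : ℕ → ℚ)
    (hcond : ∀ n, PCond a x C (f n) (len n) (d n) (ε n))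
    (hdesc : ∀ m n, m ≤ n → PLe a (f n) (len n) (d n) (ε n) (f m) (len m) (d m) (ε m))
    (p : Equiv.Perm ℕ)
    (hp : ∀ n, ∀ k < len n, p k = f n k)
    (hcover : ∀ k : ℕ, ∃ n, k < len n)
    (hd : ∀ D : ℕ, ∃ n, D ≤ d n)
    (hε : Tendsto (fun n => (ε n : ℝ)) atTop (nhds 0)) :
    ∀ i, Tendsto (fun N => ∑ j ∈ Finset.range N, a i (p j)) atTop (nhds (x i)) := by
  intro i
  rw [Metric.tendsto_atTop]
  intro η hη
  obtain ⟨n₀, hn₀⟩ := hd (i + 1)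
  obtain ⟨n, hεn, hn₀n⟩ :=
    ((hε.eventually (gt_mem_nhds (div_pos hη three_pos))).and (eventually_ge_atTop n₀)).exists
  have hi : i < d n := lt_of_lt_of_le hn₀ (hdesc n₀ n hn₀n).2.2.1
  refine ⟨len n, fun N hN => ?_⟩
  obtain ⟨m, hm⟩ := hcover N
  have hM := hdesc n (max m n) (le_max_right m n)
  have hNM : N ≤ len (max m n) := hm.le.trans (hdesc m _ (le_max_left m n)).1
  have hpM : ∑ j ∈ range N, a i (p j) = ∑ j ∈ range N, a i (f (max m n) j) :=
    sum_congr rfl fun k hk => by rw [hp _ k ((mem_range.mp hk).trans_le hNM)]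
  rw [Real.dist_eq, hpM]
  linarith [abs_sum_sub_lt_of_pLe (hcond n) hM hi hN hNM]

/-- If `⟨(f_n, d_n, ε_n) : n ∈ ℕ⟩` is a descending sequence of conditions of `P`
whose union `p = ⋃_n f_n` is a permutation of `ℕ`, with `sup_n d_n = ∞` and
`ε_n → 0`, then `p` rearranges each series `aⁱ` to converge to `xᵢ`. -/
theorem descending_sequence_gives_rearrangement
    (a : ℕ → ℕ → ℝ) (x : ℕ → ℝ) (C : ℕ → ℝ)
    (hCpos : ∀ d, 0 < d → 0 < C d)
    (hCpc : ∀ d, 0 < d → PolyConf d (C d))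
    (hCmono : ∀ d e, 0 < d → d ≤ e → C d ≤ C e)
    (hcc : ∀ i, CondConv (a i))
    (hind : ∀ c : ℕ → ℝ, (Function.support c).Finite →
      (Summable fun n => |∑ᶠ i, c i * a i n|) → c = 0)
    (f : ℕ → ℕ → ℕ) (len : ℕ → ℕ) (d : ℕ → ℕ) (ε : ℕ → ℚ)
    (hcond : ∀ n, PCond a x C (f n) (len n) (d n) (ε n))
    (hdesc : ∀ m n, m ≤ n → PLe a (f n) (len n) (d n) (ε n) (f m) (len m) (d m) (ε m))
    (p : Equiv.Perm ℕ)
    (hp : ∀ n, ∀ k < len n, p k = f n k)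
    (hcover : ∀ k : ℕ, ∃ n, k < len n)
    (hd : ∀ D : ℕ, ∃ n, D ≤ d n)
    (hε : Tendsto (fun n => (ε n : ℝ)) atTop (nhds 0)) :
    ∀ i, Tendsto (fun N => ∑ j ∈ Finset.range N, a i (p j)) atTop (nhds (x i)) :=
  descending_sequence_gives_rearrangement_general a x C f len d ε hcond hdesc p hp hcover hd hε
end
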